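/- arXiv:2003.08993 — 5 statements merged into one kernel-verified Lean document; each statement's English description precedes it below -/
import Mathlib

section
/- Under unconfoundedness, if D is a binary treatment indicator, Y(1) a potential outcome with (Y(1)) independent of D given X, and π(X) = P(D=1|X) with 0 < π(X) < 1 almost surely, then E[D·Y / π(X)] = E[Y(1)], where Y = D·Y(1) + (1-D)·Y(0). -/
/-!
Conditioning on `X` turns unconfoundedness into honest independence of `Y(1)` and `D` under
almost every conditional law, so `E[D·Y(1) | X] = π(X)·E[Y(1) | X]`. Since `D·Y = D·Y(1)` and
`1/π(X)` is `X`-measurable, `E[D·Y/π(X) | X] = E[Y(1) | X]`, and the tower property concludes.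
-/

open MeasureTheory ProbabilityTheory

namespace ProbabilityTheory

variable {Ω β β' : Type*} {m : MeasurableSpace Ω} [mΩ : MeasurableSpace Ω] [StandardBorelSpace Ω]
  {hm : m ≤ mΩ} {μ : Measure Ω} [IsFiniteMeasure μ]

lemma CondIndepFun.ae_indepFun_condExpKernel {mβ : MeasurableSpace β} {mβ' : MeasurableSpace β'}
    [MeasurableSpace.CountableOrCountablyGenerated Ω (β × β')] {f : Ω → β} {g : Ω → β'}
    (hf : Measurable f) (hg : Measurable g) (hfg : CondIndepFun m hm f g μ) :
    ∀ᵐ ω ∂μ, IndepFun f g (condExpKernel μ m ω) := by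
  rw [condIndepFun_iff_map_prod_eq_prod_map_map hf hg] at hfg
  filter_upwards [ae_of_ae_trim hm hfg] with ω hω
  rw [indepFun_iff_map_prod_eq_prod_map_map hf.aemeasurable hg.aemeasurable]
  simpa only [Kernel.map_apply _ (hf.prodMk hg), Kernel.prod_apply, Kernel.map_apply _ hf,
    Kernel.map_apply _ hg] using hω

lemma CondIndepFun.condExp_mul {f g : Ω → ℝ} (hfg : CondIndepFun m hm f g μ)
    (hf : Measurable f) (hg : Measurable g) (hf_int : Integrable f μ) (hg_int : Integrable g μ)
    (hfg_int : Integrable (f * g) μ) :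
    μ[f * g | m] =ᵐ[μ] μ[f | m] * μ[g | m] := by
  filter_upwards [hfg.ae_indepFun_condExpKernel hf hg,
    condExp_ae_eq_integral_condExpKernel hm hfg_int, condExp_ae_eq_integral_condExpKernel hm hf_int,
    condExp_ae_eq_integral_condExpKernel hm hg_int] with ω hindep hfg_eq hf_eq hg_eq
  rw [hfg_eq, Pi.mul_apply, hf_eq, hg_eq]
  exact hindep.integral_mul_eq_mul_integral hf.aestronglyMeasurable hg.aestronglyMeasurable

end ProbabilityTheory

lemma integral_div_eq_of_condExp_eq_mul {Ω : Type*} {m mΩ : MeasurableSpace Ω} (hm : m ≤ mΩ)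
    {μ : Measure Ω} [SigmaFinite (μ.trim hm)] {f g w : Ω → ℝ} (hw : StronglyMeasurable[m] w)
    (hw_ne : ∀ᵐ ω ∂μ, w ω ≠ 0) (hf : Integrable f μ) (hfw : Integrable (fun ω ↦ f ω / w ω) μ)
    (hfg : μ[f | m] =ᵐ[μ] w * μ[g | m]) :
    ∫ ω, f ω / w ω ∂μ = ∫ ω, g ω ∂μ := by
  have hw_inv : StronglyMeasurable[m] w⁻¹ := hw.measurable.inv.stronglyMeasurable
  have hfw_eq : (fun ω ↦ f ω / w ω) = w⁻¹ * f := by ext ω; simp [div_eq_inv_mul]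
  have hpull : μ[fun ω ↦ f ω / w ω | m] =ᵐ[μ] μ[g | m] := by
    rw [hfw_eq] at hfw ⊢
    filter_upwards [condExp_mul_of_stronglyMeasurable_left hw_inv hfw hf, hfg, hw_ne]
      with ω hpull_ω hfg_ω hw_ω
    rw [hpull_ω, Pi.mul_apply, hfg_ω, Pi.mul_apply, Pi.inv_apply, inv_mul_cancel_left₀ hw_ω]
  calc ∫ ω, f ω / w ω ∂μ = ∫ ω, (μ[fun ω ↦ f ω / w ω | m]) ω ∂μ := (integral_condExp hm).symm
    _ = ∫ ω, (μ[g | m]) ω ∂μ := integral_congr_ae hpull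
    _ = ∫ ω, g ω ∂μ := integral_condExp hm

lemma integral_mul_div_eq_of_condIndepFun {Ω : Type*} {m : MeasurableSpace Ω}
    [mΩ : MeasurableSpace Ω] [StandardBorelSpace Ω] (hm : m ≤ mΩ) {μ : Measure Ω}
    [IsFiniteMeasure μ] {D Y π : Ω → ℝ} {C : ℝ} (hD : Measurable D) (hY : Measurable Y)
    (hD_bdd : ∀ᵐ ω ∂μ, ‖D ω‖ ≤ C) (hY_int : Integrable Y μ) (hπ : π =ᵐ[μ] μ[D | m])
    (hπ_ne : ∀ᵐ ω ∂μ, π ω ≠ 0) (hYD : CondIndepFun m hm Y D μ)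
    (hint : Integrable (fun ω ↦ D ω * Y ω / π ω) μ) :
    ∫ ω, D ω * Y ω / π ω ∂μ = ∫ ω, Y ω ∂μ := by
  have hD_int : Integrable D μ := .of_bound hD.aestronglyMeasurable C hD_bdd
  have hDY_int : Integrable (D * Y) μ := hY_int.bdd_mul hD.aestronglyMeasurable hD_bdd
  have hDY : μ[D * Y | m] =ᵐ[μ] μ[D | m] * μ[Y | m] :=
    hYD.symm.condExp_mul hD hY hD_int hY_int hDY_int
  have hweight : (fun ω ↦ D ω * Y ω / π ω) =ᵐ[μ] fun ω ↦ (D * Y) ω / (μ[D | m]) ω := by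
    filter_upwards [hπ] with ω hπω
    rw [hπω, Pi.mul_apply]
  have hcondExp_ne : ∀ᵐ ω ∂μ, (μ[D | m]) ω ≠ 0 := by
    filter_upwards [hπ, hπ_ne] with ω hπω hω
    exact hπω ▸ hω
  rw [integral_congr_ae hweight]
  exact integral_div_eq_of_condExp_eq_mul hm stronglyMeasurable_condExp hcondExp_ne hDY_int
    (hint.congr hweight) hDY

theorem ipw_identifies_treated_mean_general
    {Ω 𝒳 : Type*} [MeasurableSpace Ω] [StandardBorelSpace Ω] [MeasurableSpace 𝒳]
    (μ : Measure Ω) [IsProbabilityMeasure μ]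
    (D : Ω → ℝ) (X : Ω → 𝒳) (Y0 Y1 : Ω → ℝ)
    (hD : Measurable D) (hX : Measurable X)
    (hY1 : Measurable Y1)
    (hDbin : ∀ ω, D ω = 0 ∨ D ω = 1)
    (hY1int : Integrable Y1 μ)
    -- π(X) := E[D | X]
    (π : Ω → ℝ) (hπ : π =ᵐ[μ] μ[D | MeasurableSpace.comap X inferInstance])
    -- overlap
    (hoverlap : ∀ᵐ ω ∂μ, 0 < π ω ∧ π ω < 1)
    -- unconfoundedness: (Y(0), Y(1)) ⫫ D | X
    (hunconf : CondIndepFun (MeasurableSpace.comap X inferInstance) hX.comap_le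
      (fun ω => (Y0 ω, Y1 ω)) D μ)
    -- integrability of the weighted term
    (hint : Integrable (fun ω => D ω * Y1 ω / π ω) μ) :
    ∫ ω, D ω * (D ω * Y1 ω + (1 - D ω) * Y0 ω) / π ω ∂μ = ∫ ω, Y1 ω ∂μ := by
  have hD_observed : ∀ ω, D ω * (D ω * Y1 ω + (1 - D ω) * Y0 ω) = D ω * Y1 ω := by
    intro ω; rcases hDbin ω with h | h <;> simp [h]
  have hD_bdd : ∀ ω, ‖D ω‖ ≤ 1 := by
    intro ω; rcases hDbin ω with h | h <;> simp [h]
  simp_rw [hD_observed]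
  exact integral_mul_div_eq_of_condIndepFun hX.comap_le hD hY1 (.of_forall hD_bdd) hY1int hπ
    (hoverlap.mono fun ω h ↦ h.1.ne') (hunconf.comp measurable_snd measurable_id) hint

/-- Under unconfoundedness and overlap, `E[D·Y/π(X)] = E[Y(1)]`,
where `Y = D·Y(1) + (1-D)·Y(0)` and `π(X) = E[D|X]`. -/
theorem ipw_identifies_treated_mean
    {Ω 𝒳 : Type*} [MeasurableSpace Ω] [StandardBorelSpace Ω] [MeasurableSpace 𝒳]
    (μ : Measure Ω) [IsProbabilityMeasure μ]
    (D : Ω → ℝ) (X : Ω → 𝒳) (Y0 Y1 : Ω → ℝ)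
    (hD : Measurable D) (hX : Measurable X)
    (hY0 : Measurable Y0) (hY1 : Measurable Y1)
    (hDbin : ∀ ω, D ω = 0 ∨ D ω = 1)
    (hY0int : Integrable Y0 μ) (hY1int : Integrable Y1 μ)
    -- π(X) := E[D | X]
    (π : Ω → ℝ) (hπ : π =ᵐ[μ] μ[D | MeasurableSpace.comap X inferInstance])
    -- overlap
    (hoverlap : ∀ᵐ ω ∂μ, 0 < π ω ∧ π ω < 1)
    -- unconfoundedness: (Y(0), Y(1)) ⫫ D | X
    (hunconf : CondIndepFun (MeasurableSpace.comap X inferInstance) hX.comap_le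
      (fun ω => (Y0 ω, Y1 ω)) D μ)
    -- integrability of the weighted term
    (hint : Integrable (fun ω => D ω * Y1 ω / π ω) μ) :
    ∫ ω, D ω * (D ω * Y1 ω + (1 - D ω) * Y0 ω) / π ω ∂μ = ∫ ω, Y1 ω ∂μ :=
  ipw_identifies_treated_mean_general μ D X Y0 Y1 hD hX hY1 hDbin hY1int π hπ hoverlap hunconf hint
end

section
/- For the treated group, E[D·Y(1)] = P(D=1)·E[Y(1)|D=1], and under unconfoundedness E[(1-D)·Y(0)·π(X)/(1-π(X))] = E[π(X)·Y(0)] = P(D=1)·E[Y(0)|D=1]. -/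
/-!
Write `D` as the indicator of the treated set `A` and let `p = P(A | X)`. For every
`X`-measurable `s`, conditional independence of `Y(0)` and `A` given `X` says that the laws of
`Y(0)` under `1_{s ∩ A} μ` and under `1_s p μ` agree on Borel sets; comparing their means gives
`∫_s 1_A Y(0) = ∫_s p Y(0)`, i.e. `E[1_A Y(0) | X] = p E[Y(0) | X]`. Since the odds `p / (1 - p)`
are `X`-measurable and `E[1_{Aᶜ} Y(0) | X] = (1 - p) E[Y(0) | X]`, conditioning on `X` turns the
odds-weighted control outcome into `p Y(0)`, whose mean is `E[1_A Y(0)]`.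
-/

open MeasureTheory ProbabilityTheory Set Filter

lemma integral_mul_condExp_of_stronglyMeasurable {Ω : Type*} {m mΩ : MeasurableSpace Ω}
    {μ : Measure Ω} (hm : m ≤ mΩ) [SigmaFinite (μ.trim hm)] {f g : Ω → ℝ}
    (hf : StronglyMeasurable[m] f) (hfg : Integrable (f * g) μ) (hg : Integrable g μ) :
    ∫ ω, f ω * g ω ∂μ = ∫ ω, f ω * (μ[g | m]) ω ∂μ :=
  (integral_condExp hm).symm.trans
    (integral_congr_ae (condExp_mul_of_stronglyMeasurable_left hf hfg hg))

lemma toReal_mul_integral_cond {Ω : Type*} [MeasurableSpace Ω] (μ : Measure Ω)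
    [IsFiniteMeasure μ] (A : Set Ω) (Y : Ω → ℝ) :
    (μ A).toReal * ∫ ω, Y ω ∂μ[|A] = ∫ ω in A, Y ω ∂μ := by
  by_cases hA0 : μ A = 0
  · simp [hA0, Measure.restrict_eq_zero.2 hA0]
  rw [ProbabilityTheory.cond, integral_smul_measure, smul_eq_mul, ← mul_assoc, ENNReal.toReal_inv,
    mul_inv_cancel₀ (ENNReal.toReal_ne_zero.2 ⟨hA0, measure_ne_top μ A⟩), one_mul]

section CondIndepEvent

variable {Ω : Type*} {m mΩ : MeasurableSpace Ω} {μ : Measure Ω} [IsFiniteMeasure μ] {A s : Set Ω}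

lemma ae_condExp_indicator_mem_Icc (hm : m ≤ mΩ) (hA : MeasurableSet A) :
    ∀ᵐ ω ∂μ, (μ⟦A | m⟧) ω ∈ Icc (0 : ℝ) 1 := by
  have hle : μ⟦A | m⟧ ≤ᵐ[μ] μ[fun _ => (1 : ℝ) | m] :=
    condExp_mono ((integrable_const 1).indicator hA) (integrable_const 1)
      (.of_forall fun ω => indicator_le_self' (fun _ _ => zero_le_one' ℝ) ω)
  rw [condExp_const hm] at hle
  have hnonneg : 0 ≤ᵐ[μ] μ⟦A | m⟧ :=
    condExp_nonneg (.of_forall fun ω => indicator_nonneg (fun _ _ => zero_le_one' ℝ) ω)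
  filter_upwards [hnonneg, hle] with ω h0 h1 using ⟨h0, h1⟩

lemma ae_norm_condExp_indicator_le_one (hm : m ≤ mΩ) (hA : MeasurableSet A) :
    ∀ᵐ ω ∂μ, ‖(μ⟦A | m⟧) ω‖ ≤ 1 := by
  filter_upwards [ae_condExp_indicator_mem_Icc hm hA] with ω hω
  rw [Real.norm_eq_abs, abs_le]
  exact ⟨by linarith [hω.1], hω.2⟩

variable [StandardBorelSpace Ω] {hm : m ≤ mΩ} {Y : Ω → ℝ}

lemma setIntegral_inter_preimage_condExp_indicator (hA : MeasurableSet A) (hY : Measurable Y)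
    (hAY : CondIndepFun m hm Y (A.indicator fun _ => (1 : ℝ)) μ) (hs : MeasurableSet[m] s)
    {v : Set ℝ} (hv : MeasurableSet v) :
    ∫ ω in s ∩ Y ⁻¹' v, (μ⟦A | m⟧) ω ∂μ = μ.real (s ∩ (Y ⁻¹' v ∩ A)) := by
  have hpre : (A.indicator fun _ => (1 : ℝ)) ⁻¹' {1} = A := by
    ext ω; by_cases hω : ω ∈ A <;> simp [hω]
  have hprod := (condIndepFun_iff_condExp_inter_preimage_eq_mul hY
    (measurable_const.indicator hA)).1 hAY v {1} hv (measurableSet_singleton 1)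
  rw [hpre] at hprod
  have hint : Integrable ((Y ⁻¹' v).indicator (fun _ => (1 : ℝ)) * μ⟦A | m⟧) μ :=
    integrable_condExp.bdd_mul (c := 1) (measurable_const.indicator (hY hv)).aestronglyMeasurable
      (.of_forall fun ω => by by_cases hω : ω ∈ Y ⁻¹' v <;> simp [hω])
  have hpull : μ[(Y ⁻¹' v).indicator (fun _ => (1 : ℝ)) * μ⟦A | m⟧ | m]
      =ᵐ[μ] μ⟦Y ⁻¹' v | m⟧ * μ⟦A | m⟧ :=
    condExp_mul_of_stronglyMeasurable_right stronglyMeasurable_condExp hint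
      ((integrable_const 1).indicator (hY hv))
  calc ∫ ω in s ∩ Y ⁻¹' v, (μ⟦A | m⟧) ω ∂μ
      = ∫ ω in s, ((Y ⁻¹' v).indicator (fun _ => (1 : ℝ)) * μ⟦A | m⟧) ω ∂μ := by
        rw [← setIntegral_indicator (hY hv)]
        congr 1 with ω
        by_cases hω : ω ∈ Y ⁻¹' v <;> simp [hω]
    _ = ∫ ω in s, (μ⟦Y ⁻¹' v | m⟧ * μ⟦A | m⟧) ω ∂μ := by
        rw [← setIntegral_condExp hm hint hs]
        exact setIntegral_congr_ae (hm s hs) (hpull.mono fun ω h _ => h)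
    _ = ∫ ω in s, (μ⟦Y ⁻¹' v ∩ A | m⟧) ω ∂μ :=
        setIntegral_congr_ae (hm s hs) (hprod.mono fun ω h _ => h.symm)
    _ = μ.real (s ∩ (Y ⁻¹' v ∩ A)) := by
        rw [setIntegral_condExp hm ((integrable_const 1).indicator ((hY hv).inter hA)) hs,
          setIntegral_indicator ((hY hv).inter hA), setIntegral_const, smul_eq_mul, mul_one]

lemma setIntegral_indicator_eq_setIntegral_condExp_mul (hA : MeasurableSet A) (hY : Measurable Y)
    (hAY : CondIndepFun m hm Y (A.indicator fun _ => (1 : ℝ)) μ) (hs : MeasurableSet[m] s) :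
    ∫ ω in s, A.indicator Y ω ∂μ = ∫ ω in s, (μ⟦A | m⟧) ω * Y ω ∂μ := by
  set ν := (μ.restrict s).withDensity fun ω => ENNReal.ofReal ((μ⟦A | m⟧) ω)
  have hdens : Measurable fun ω => ENNReal.ofReal ((μ⟦A | m⟧) ω) :=
    (stronglyMeasurable_condExp.mono hm).measurable.ennreal_ofReal
  have hmap : (μ.restrict (s ∩ A)).map Y = ν.map Y := by
    ext v hv
    rw [Measure.map_apply hY hv, Measure.map_apply hY hv, withDensity_apply _ (hY hv),
      Measure.restrict_restrict (hY hv), inter_comm (Y ⁻¹' v), Measure.restrict_apply (hY hv),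
      ← ofReal_integral_eq_lintegral_ofReal integrable_condExp.integrableOn
        (ae_restrict_of_ae ((ae_condExp_indicator_mem_Icc hm hA).mono fun _ h => h.1)),
      setIntegral_inter_preimage_condExp_indicator hA hY hAY hs hv, ofReal_measureReal,
      inter_left_comm]
  calc ∫ ω in s, A.indicator Y ω ∂μ
      = ∫ ω in s ∩ A, Y ω ∂μ := setIntegral_indicator hA
    _ = ∫ y, y ∂(μ.restrict (s ∩ A)).map Y :=
        (integral_map hY.aemeasurable aestronglyMeasurable_id).symm
    _ = ∫ y, y ∂ν.map Y := by rw [hmap]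
    _ = ∫ ω, Y ω ∂ν := integral_map hY.aemeasurable aestronglyMeasurable_id
    _ = ∫ ω in s, (ENNReal.ofReal ((μ⟦A | m⟧) ω)).toReal • Y ω ∂μ :=
        integral_withDensity_eq_integral_toReal_smul hdens
          (.of_forall fun _ => ENNReal.ofReal_lt_top) _
    _ = ∫ ω in s, (μ⟦A | m⟧) ω * Y ω ∂μ := by
        refine integral_congr_ae (ae_restrict_of_ae ?_)
        filter_upwards [ae_condExp_indicator_mem_Icc hm hA] with ω hω
        rw [ENNReal.toReal_ofReal hω.1, smul_eq_mul]

lemma condExp_indicator_ae_eq_mul_condExp (hA : MeasurableSet A) (hY : Measurable Y)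
    (hYint : Integrable Y μ) (hAY : CondIndepFun m hm Y (A.indicator fun _ => (1 : ℝ)) μ) :
    μ[A.indicator Y | m] =ᵐ[μ] μ⟦A | m⟧ * μ[Y | m] := by
  have hbdd := ae_norm_condExp_indicator_le_one (μ := μ) hm hA
  have hmeas : AEStronglyMeasurable (μ⟦A | m⟧) μ :=
    (stronglyMeasurable_condExp.mono hm).aestronglyMeasurable
  have hpY : Integrable (μ⟦A | m⟧ * Y) μ := hYint.bdd_mul hmeas hbdd
  refine (ae_eq_condExp_of_forall_setIntegral_eq hm (hYint.indicator hA)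
    (fun s _ _ => (integrable_condExp.bdd_mul hmeas hbdd).integrableOn) (fun s hs _ => ?_)
    (stronglyMeasurable_condExp.mul stronglyMeasurable_condExp).aestronglyMeasurable).symm
  calc ∫ ω in s, (μ⟦A | m⟧ * μ[Y | m]) ω ∂μ
      = ∫ ω in s, (μ[μ⟦A | m⟧ * Y | m]) ω ∂μ :=
        setIntegral_congr_ae (hm s hs) ((condExp_mul_of_stronglyMeasurable_left
          stronglyMeasurable_condExp hpY hYint).mono fun _ h _ => h.symm)
    _ = ∫ ω in s, (μ⟦A | m⟧) ω * Y ω ∂μ := setIntegral_condExp hm hpY hs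
    _ = ∫ ω in s, A.indicator Y ω ∂μ :=
        (setIntegral_indicator_eq_setIntegral_condExp_mul hA hY hAY hs).symm

lemma integral_odds_mul_indicator_compl (hA : MeasurableSet A) (hY : Measurable Y)
    (hYint : Integrable Y μ) (hAY : CondIndepFun m hm Y (A.indicator fun _ => (1 : ℝ)) μ)
    (hlt : ∀ᵐ ω ∂μ, (μ⟦A | m⟧) ω < 1)
    (hint : Integrable (fun ω => (μ⟦A | m⟧) ω / (1 - (μ⟦A | m⟧) ω) * Aᶜ.indicator Y ω) μ) :
    ∫ ω, (μ⟦A | m⟧) ω / (1 - (μ⟦A | m⟧) ω) * Aᶜ.indicator Y ω ∂μ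
      = ∫ ω, (μ⟦A | m⟧) ω * Y ω ∂μ := by
  set p := μ⟦A | m⟧
  have hodds : StronglyMeasurable[m] fun ω => p ω / (1 - p ω) :=
    (stronglyMeasurable_condExp.measurable.div
      (measurable_const.sub stronglyMeasurable_condExp.measurable)).stronglyMeasurable
  have hcompl : μ[Aᶜ.indicator Y | m] =ᵐ[μ] fun ω => (1 - p ω) * (μ[Y | m]) ω := by
    rw [indicator_compl]
    filter_upwards [condExp_sub hYint (hYint.indicator hA) m,
      condExp_indicator_ae_eq_mul_condExp hA hY hYint hAY] with ω hsub hmul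
    rw [hsub, Pi.sub_apply, hmul, Pi.mul_apply]
    ring
  have hpY : Integrable (p * Y) μ :=
    hYint.bdd_mul (stronglyMeasurable_condExp.mono hm).aestronglyMeasurable
      (ae_norm_condExp_indicator_le_one hm hA)
  calc ∫ ω, p ω / (1 - p ω) * Aᶜ.indicator Y ω ∂μ
      = ∫ ω, p ω / (1 - p ω) * (μ[Aᶜ.indicator Y | m]) ω ∂μ :=
        integral_mul_condExp_of_stronglyMeasurable hm hodds hint (hYint.indicator hA.compl)
    _ = ∫ ω, p ω * (μ[Y | m]) ω ∂μ := by
        refine integral_congr_ae ?_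
        filter_upwards [hcompl, hlt] with ω hω hω1
        rw [hω]
        field_simp [(sub_pos.2 hω1).ne']
    _ = ∫ ω, p ω * Y ω ∂μ :=
        (integral_mul_condExp_of_stronglyMeasurable hm stronglyMeasurable_condExp hpY hYint).symm

end CondIndepEvent

theorem att_weighting_identities_general
    {Ω 𝒳 : Type*} [MeasurableSpace Ω] [StandardBorelSpace Ω] [MeasurableSpace 𝒳]
    (μ : Measure Ω) [IsProbabilityMeasure μ]
    (D : Ω → ℝ) (X : Ω → 𝒳) (Y0 Y1 : Ω → ℝ)
    (hD : Measurable D) (hX : Measurable X)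
    (hY0 : Measurable Y0)
    (hDbin : ∀ ω, D ω = 0 ∨ D ω = 1)
    (hY0int : Integrable Y0 μ)
    (π : Ω → ℝ) (hπ : π =ᵐ[μ] μ[D | MeasurableSpace.comap X inferInstance])
    (hoverlap : ∀ᵐ ω ∂μ, 0 < π ω ∧ π ω < 1)
    (hunconf : CondIndepFun (MeasurableSpace.comap X inferInstance) hX.comap_le Y0 D μ)
    (hint : Integrable (fun ω => (1 - D ω) * Y0 ω * π ω / (1 - π ω)) μ) :
    (∫ ω, D ω * Y1 ω ∂μ
        = (μ {ω | D ω = 1}).toReal * ∫ ω, Y1 ω ∂μ[|{ω | D ω = 1}])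
    ∧ (∫ ω, (1 - D ω) * Y0 ω * π ω / (1 - π ω) ∂μ = ∫ ω, π ω * Y0 ω ∂μ)
    ∧ (∫ ω, π ω * Y0 ω ∂μ
        = (μ {ω | D ω = 1}).toReal * ∫ ω, Y0 ω ∂μ[|{ω | D ω = 1}]) := by
  set A := {ω | D ω = 1}
  have hA : MeasurableSet A := hD (measurableSet_singleton 1)
  have hDA : D = A.indicator fun _ => 1 := by
    funext ω; rcases hDbin ω with h | h <;> simp [A, h]
  have hDmul : ∀ Y : Ω → ℝ, (fun ω => D ω * Y ω) = A.indicator Y := by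
    intro Y; rw [hDA]; funext ω; by_cases hω : ω ∈ A <;> simp [hω]
  rw [hDA] at hπ hunconf
  set p := μ⟦A | MeasurableSpace.comap X inferInstance⟧
  have hπY0 : ∫ ω, π ω * Y0 ω ∂μ = ∫ ω, p ω * Y0 ω ∂μ :=
    integral_congr_ae (hπ.mono fun ω h => by simp only [h])
  have hweight : (fun ω => (1 - D ω) * Y0 ω * π ω / (1 - π ω))
      =ᵐ[μ] fun ω => p ω / (1 - p ω) * Aᶜ.indicator Y0 ω := by
    filter_upwards [hπ] with ω h
    rw [h, hDA]
    by_cases hω : ω ∈ A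
    · simp [hω]
    · simp [hω]; ring
  refine ⟨?_, ?_, ?_⟩
  · rw [hDmul, integral_indicator hA, toReal_mul_integral_cond]
  · rw [integral_congr_ae hweight, hπY0]
    refine integral_odds_mul_indicator_compl hA hY0 hY0int hunconf ?_ (hint.congr hweight)
    filter_upwards [hπ, hoverlap] with ω h h01
    exact h.symm.trans_lt h01.2
  · rw [hπY0, ← setIntegral_univ,
      ← setIntegral_indicator_eq_setIntegral_condExp_mul hA hY0 hunconf MeasurableSet.univ,
      setIntegral_univ, integral_indicator hA, toReal_mul_integral_cond]

/-- `E[D·Y(1)] = P(D=1)·E[Y(1)|D=1]`, and under `Y(0) ⫫ D | X`,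
`E[(1-D)·Y(0)·π(X)/(1-π(X))] = E[π(X)·Y(0)] = P(D=1)·E[Y(0)|D=1]`. -/
theorem att_weighting_identities
    {Ω 𝒳 : Type*} [MeasurableSpace Ω] [StandardBorelSpace Ω] [MeasurableSpace 𝒳]
    (μ : Measure Ω) [IsProbabilityMeasure μ]
    (D : Ω → ℝ) (X : Ω → 𝒳) (Y0 Y1 : Ω → ℝ)
    (hD : Measurable D) (hX : Measurable X)
    (hY0 : Measurable Y0) (hY1 : Measurable Y1)
    (hDbin : ∀ ω, D ω = 0 ∨ D ω = 1)
    (hpos : 0 < μ {ω | D ω = 1})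
    (hY0int : Integrable Y0 μ) (hY1int : Integrable Y1 μ)
    (π : Ω → ℝ) (hπ : π =ᵐ[μ] μ[D | MeasurableSpace.comap X inferInstance])
    (hoverlap : ∀ᵐ ω ∂μ, 0 < π ω ∧ π ω < 1)
    (hunconf : CondIndepFun (MeasurableSpace.comap X inferInstance) hX.comap_le Y0 D μ)
    (hint : Integrable (fun ω => (1 - D ω) * Y0 ω * π ω / (1 - π ω)) μ) :
    (∫ ω, D ω * Y1 ω ∂μ
        = (μ {ω | D ω = 1}).toReal * ∫ ω, Y1 ω ∂μ[|{ω | D ω = 1}])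
    ∧ (∫ ω, (1 - D ω) * Y0 ω * π ω / (1 - π ω) ∂μ = ∫ ω, π ω * Y0 ω ∂μ)
    ∧ (∫ ω, π ω * Y0 ω ∂μ
        = (μ {ω | D ω = 1}).toReal * ∫ ω, Y0 ω ∂μ[|{ω | D ω = 1}]) :=
  att_weighting_identities_general μ D X Y0 Y1 hD hX hY0 hDbin hY0int π hπ hoverlap hunconf hint
end

section
/- If for each i the random variables Z_i = (Y_{i0}, Y_{i1}, D_i, X_i) are i.i.d., the propensity score model is correct, the overlap condition holds, and E[Y_0(1)] = E[Y_0(0)] (pre-intervention mean equality), then the inverse propensity weighted difference-in-difference estimator τ̂_IPWDID = (1/n)Σ_i [D_i Y_{i1}/π(X_i) - (1-D_i)Y_{i1}/(1-π(X_i))] - (1/n)Σ_i [D_i Y_{i0}/π(X_i) - (1-D_i)Y_{i0}/(1-π(X_i))] converges almost surely to the average treatment effect τ_0 = E[Y_1(1)] - E[Y_1(0)] as n → ∞. -/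
/-!
By unconfoundedness, an outcome `Z` and the treatment `D` are independent under almost every
regular conditional law given `X`, so `E[D Z | X] = E[D | X] E[Z | X] = π(X) E[Z | X]` and the
inverse propensity weighted term `D Z / π(X)` has mean `E[Z]`; likewise `(1 - D) Z / (1 - π(X))`
has mean `E[Z]`. Hence the post-period IPW contrast has mean `E[Y₁(1)] - E[Y₁(0)]`, while the
pre-period one, where every unit is untreated and observes `Y₀(0)`, has mean
`E[Y₀(0)] - E[Y₀(0)] = 0`. The strong law of large numbers for the i.i.d. unit records turns
both means into almost sure limits of the sample averages.
-/

open MeasureTheory ProbabilityTheory Filter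

section ConditionalIndependence

variable {Ω : Type*} {m mΩ : MeasurableSpace Ω} [StandardBorelSpace Ω] {hm : m ≤ mΩ}
  {μ : Measure Ω} [IsFiniteMeasure μ]

theorem ProbabilityTheory.CondIndepFun.condExp_mul_s5 {f g : Ω → ℝ}
    (hfg : CondIndepFun m hm f g μ) (hf : Measurable f) (hg : Measurable g)
    (hfi : Integrable f μ) (hgi : Integrable g μ) (hfgi : Integrable (f * g) μ) :
    μ[f * g | m] =ᵐ[μ] μ[f | m] * μ[g | m] := by
  have hindep : ∀ᵐ ω ∂μ, f ⟂ᵢ[condExpKernel μ m ω] g := by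
    refine ae_of_ae_trim hm ?_
    filter_upwards [(condIndepFun_iff_map_prod_eq_prod_map_map hf hg).mp hfg] with ω hω
    rw [indepFun_iff_map_prod_eq_prod_map_map hf.aemeasurable hg.aemeasurable]
    simpa [Kernel.map_apply _ (hf.prodMk hg), Kernel.prod_apply, Kernel.map_apply _ hf,
      Kernel.map_apply _ hg] using hω
  filter_upwards [hindep, condExp_ae_eq_integral_condExpKernel hm hfgi,
    condExp_ae_eq_integral_condExpKernel hm hfi, condExp_ae_eq_integral_condExpKernel hm hgi]
    with ω hω hfg_eq hf_eq hg_eq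
  rw [Pi.mul_apply, hfg_eq, hf_eq, hg_eq]
  exact hω.integral_mul_eq_mul_integral hf.aestronglyMeasurable hg.aestronglyMeasurable

theorem ProbabilityTheory.CondIndepFun.integral_mul_div_eq_integral {D Z p : Ω → ℝ}
    (hci : CondIndepFun m hm Z D μ) (hZ : Measurable Z) (hD : Measurable D)
    (hZi : Integrable Z μ) (hDi : Integrable D μ) (hZDi : Integrable (Z * D) μ)
    (hp : Measurable[m] p) (hp0 : ∀ᵐ ω ∂μ, p ω ≠ 0) (hpD : p =ᵐ[μ] μ[D | m])
    (hint : Integrable (fun ω => D ω * Z ω / p ω) μ) :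
    ∫ ω, D ω * Z ω / p ω ∂μ = ∫ ω, Z ω ∂μ := by
  have hrw : (fun ω => D ω * Z ω / p ω) = p⁻¹ * (Z * D) := by
    ext ω
    simp only [Pi.mul_apply, Pi.inv_apply]
    ring
  rw [hrw] at hint ⊢
  have hpull := condExp_mul_of_stronglyMeasurable_left hp.inv.stronglyMeasurable hint hZDi
  calc ∫ ω, (p⁻¹ * (Z * D)) ω ∂μ = ∫ ω, (μ[p⁻¹ * (Z * D) | m]) ω ∂μ :=
        (integral_condExp hm).symm
    _ = ∫ ω, (μ[Z | m]) ω ∂μ := by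
      refine integral_congr_ae ?_
      filter_upwards [hpull, hci.condExp_mul_s5 hZ hD hZi hDi hZDi, hpD, hp0]
        with ω hpull hmul hpD hp0
      simp only [hpull, Pi.mul_apply, hmul, Pi.inv_apply, ← hpD]
      field_simp
    _ = ∫ ω, Z ω ∂μ := integral_condExp hm

end ConditionalIndependence

noncomputable def ipwContrast (d y p : ℝ) : ℝ := d * y / p - (1 - d) * y / (1 - p)

@[fun_prop]
theorem Measurable.ipwContrast {α : Type*} [MeasurableSpace α] {d y p : α → ℝ}
    (hd : Measurable d) (hy : Measurable y) (hp : Measurable p) :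
    Measurable fun a => ipwContrast (d a) (y a) (p a) := by
  unfold _root_.ipwContrast
  fun_prop

theorem ipwContrast_eq_of_binary {d y y₀ y₁ p : ℝ} (hd : d = 0 ∨ d = 1)
    (hy : y = d * y₁ + (1 - d) * y₀) :
    ipwContrast d y p = d * y₁ / p - (1 - d) * y₀ / (1 - p) := by
  rcases hd with rfl | rfl <;> simp [ipwContrast, hy]

theorem integral_ipwContrast {Ω : Type*} {m mΩ : MeasurableSpace Ω} [StandardBorelSpace Ω]
    {hm : m ≤ mΩ} {μ : Measure Ω} [IsFiniteMeasure μ] {D Y Y₀ Y₁ p : Ω → ℝ}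
    (hD : Measurable D) (hDbin : ∀ ω, D ω = 0 ∨ D ω = 1)
    (hY : ∀ ω, Y ω = D ω * Y₁ ω + (1 - D ω) * Y₀ ω)
    (hY₀ : Measurable Y₀) (hY₁ : Measurable Y₁)
    (hY₀i : Integrable Y₀ μ) (hY₁i : Integrable Y₁ μ)
    (hci₀ : CondIndepFun m hm Y₀ D μ) (hci₁ : CondIndepFun m hm Y₁ D μ)
    (hp : Measurable[m] p) (hp01 : ∀ ω, 0 < p ω ∧ p ω < 1) (hpD : p =ᵐ[μ] μ[D | m])
    (hint : Integrable (fun ω => ipwContrast (D ω) (Y ω) (p ω)) μ) :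
    ∫ ω, ipwContrast (D ω) (Y ω) (p ω) ∂μ
      = ∫ ω, Y₁ ω ∂μ - ∫ ω, Y₀ ω ∂μ := by
  have hDbdd : ∀ᵐ ω ∂μ, ‖D ω‖ ≤ 1 :=
    ae_of_all _ fun ω => by rcases hDbin ω with h | h <;> simp [h]
  have hDbdd' : ∀ᵐ ω ∂μ, ‖1 - D ω‖ ≤ 1 :=
    ae_of_all _ fun ω => by rcases hDbin ω with h | h <;> simp [h]
  have hDi : Integrable D μ := (integrable_const 1).mono' hD.aestronglyMeasurable hDbdd
  simp only [fun ω => ipwContrast_eq_of_binary (p := p ω) (hDbin ω) (hY ω)] at hint ⊢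
  -- the two weighted terms have disjoint supports, so each inherits integrability
  -- from their difference
  have htreated : Integrable (fun ω => D ω * Y₁ ω / p ω) μ := by
    refine (hint.bdd_mul hD.aestronglyMeasurable hDbdd).congr (ae_of_all _ fun ω => ?_)
    rcases hDbin ω with h | h <;> simp [h]
  have hcontrol : Integrable (fun ω => (1 - D ω) * Y₀ ω / (1 - p ω)) μ := by
    refine (hint.bdd_mul (hD.const_sub 1).aestronglyMeasurable hDbdd').neg.congr
      (ae_of_all _ fun ω => ?_)
    rcases hDbin ω with h | h <;> simp [h]
  have hpD' : (fun ω => 1 - p ω) =ᵐ[μ] μ[fun ω => 1 - D ω | m] := by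
    filter_upwards [hpD, condExp_sub (integrable_const 1) hDi m] with ω hpD hsub
    rw [show (fun ω => 1 - D ω) = (fun _ => (1 : ℝ)) - D from rfl, hsub, Pi.sub_apply,
      condExp_const hm, hpD]
  have hci₀' : CondIndepFun m hm Y₀ (fun ω => 1 - D ω) μ :=
    hci₀.comp measurable_id (measurable_const.sub measurable_id)
  rw [integral_sub htreated hcontrol,
    hci₁.integral_mul_div_eq_integral hY₁ hD hY₁i hDi
      (hY₁i.mul_bdd hD.aestronglyMeasurable hDbdd) hp
      (ae_of_all _ fun ω => (hp01 ω).1.ne') hpD htreated,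
    hci₀'.integral_mul_div_eq_integral hY₀ (hD.const_sub 1) hY₀i
      ((integrable_const 1).sub hDi)
      (hY₀i.mul_bdd (hD.const_sub 1).aestronglyMeasurable hDbdd') (hp.const_sub 1)
      (ae_of_all _ fun ω => (sub_pos.2 (hp01 ω).2).ne') hpD' hcontrol]

theorem strong_law_ae_real_comp {Ω β : Type*} {mΩ : MeasurableSpace Ω} [MeasurableSpace β]
    {μ : Measure Ω} {T : ℕ → Ω → β} (hindep : iIndepFun T μ)
    (hident : ∀ i, IdentDistrib (T i) (T 0) μ μ) {F : β → ℝ} (hF : Measurable F)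
    (hFi : Integrable (fun ω => F (T 0 ω)) μ) :
    ∀ᵐ ω ∂μ, Tendsto (fun n : ℕ => (∑ i ∈ Finset.range n, F (T i ω)) / n) atTop
      (nhds (∫ ω, F (T 0 ω) ∂μ)) :=
  strong_law_ae_real (fun i => F ∘ T i) hFi
    (fun _ _ hij => (hindep.indepFun hij).comp hF hF) (fun i => (hident i).comp hF)

theorem ipwdid_consistent_ate_general
    {Ω 𝒳 : Type*} [MeasurableSpace Ω] [StandardBorelSpace Ω] [MeasurableSpace 𝒳]
    (μ : Measure Ω) [IsProbabilityMeasure μ]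
    -- potential outcomes (pre and post period, control and treated versions),
    -- treatment and covariate, for each unit i
    (Pre0 Pre1 Post0 Post1 : ℕ → Ω → ℝ) (D : ℕ → Ω → ℝ) (X : ℕ → Ω → 𝒳)
    (hPre0 : ∀ i, Measurable (Pre0 i))
    (hPost0 : ∀ i, Measurable (Post0 i)) (hPost1 : ∀ i, Measurable (Post1 i))
    (hD : ∀ i, Measurable (D i)) (hX : ∀ i, Measurable (X i))
    (hDbin : ∀ i ω, D i ω = 0 ∨ D i ω = 1)
    -- observed outcomes: no treatment at time 0, consistency at time 1
    (Ypre Ypost : ℕ → Ω → ℝ)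
    (hYpre : ∀ i ω, Ypre i ω = Pre0 i ω)
    (hYpost : ∀ i ω, Ypost i ω = D i ω * Post1 i ω + (1 - D i ω) * Post0 i ω)
    -- known (correct) propensity score with overlap
    (π : 𝒳 → ℝ) (hπm : Measurable π) (hπ01 : ∀ x, 0 < π x ∧ π x < 1)
    (hπcorrect : ∀ i, (fun ω => π (X i ω))
      =ᵐ[μ] μ[D i | MeasurableSpace.comap (X i) inferInstance])
    -- unconfoundedness for each unit
    (hunconf : ∀ i, CondIndepFun (MeasurableSpace.comap (X i) inferInstance)
      (hX i).comap_le
      (fun ω => (Pre0 i ω, Pre1 i ω, Post0 i ω, Post1 i ω)) (D i) μ)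
    -- i.i.d. units
    (hindep : iIndepFun
      (fun i ω => (Pre0 i ω, Pre1 i ω, Post0 i ω, Post1 i ω, D i ω, X i ω)) μ)
    (hident : ∀ i, IdentDistrib
      (fun ω => (Pre0 i ω, Pre1 i ω, Post0 i ω, Post1 i ω, D i ω, X i ω))
      (fun ω => (Pre0 0 ω, Pre1 0 ω, Post0 0 ω, Post1 0 ω, D 0 ω, X 0 ω)) μ μ)
    -- integrability of the weighted terms
    (hint : ∀ i t, Integrable (fun ω =>
      D i ω * (if t = 1 then Ypost i ω else Ypre i ω) / π (X i ω)
      - (1 - D i ω) * (if t = 1 then Ypost i ω else Ypre i ω) / (1 - π (X i ω))) μ)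
    (hPreint : ∀ i, Integrable (Pre0 i) μ ∧ Integrable (Pre1 i) μ)
    (hPostint : ∀ i, Integrable (Post0 i) μ ∧ Integrable (Post1 i) μ) :
    ∀ᵐ ω ∂μ, Tendsto (fun n : ℕ =>
      (1 / (n : ℝ)) * ∑ i ∈ Finset.range n,
        (D i ω * Ypost i ω / π (X i ω)
          - (1 - D i ω) * Ypost i ω / (1 - π (X i ω)))
      - (1 / (n : ℝ)) * ∑ i ∈ Finset.range n,
        (D i ω * Ypre i ω / π (X i ω)
          - (1 - D i ω) * Ypre i ω / (1 - π (X i ω))))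
      atTop (nhds (∫ ω, Post1 0 ω ∂μ - ∫ ω, Post0 0 ω ∂μ)) := by
  obtain rfl : Ypost = fun i ω => D i ω * Post1 i ω + (1 - D i ω) * Post0 i ω :=
    funext₂ hYpost
  obtain rfl : Pre0 = Ypre := (funext₂ hYpre).symm
  have hπX : Measurable[MeasurableSpace.comap (X 0) inferInstance] fun ω => π (X 0 ω) :=
    hπm.comp (comap_measurable (X 0))
  have hpost_mean : ∫ ω, ipwContrast (D 0 ω)
      (D 0 ω * Post1 0 ω + (1 - D 0 ω) * Post0 0 ω) (π (X 0 ω)) ∂μ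
      = ∫ ω, Post1 0 ω ∂μ - ∫ ω, Post0 0 ω ∂μ :=
    integral_ipwContrast (hD 0) (hDbin 0) (fun _ => rfl) (hPost0 0) (hPost1 0)
      (hPostint 0).1 (hPostint 0).2 ((hunconf 0).comp measurable_snd.snd.fst measurable_id)
      ((hunconf 0).comp measurable_snd.snd.snd measurable_id) hπX (fun _ => hπ01 _)
      (hπcorrect 0) (hint 0 1)
  have hpre_mean : ∫ ω, ipwContrast (D 0 ω) (Pre0 0 ω) (π (X 0 ω)) ∂μ = 0 := by
    rw [integral_ipwContrast (Y := Pre0 0) (hD 0) (hDbin 0) (fun _ => by ring) (hPre0 0) (hPre0 0)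
      (hPreint 0).1 (hPreint 0).1 ((hunconf 0).comp measurable_fst measurable_id)
      ((hunconf 0).comp measurable_fst measurable_id) hπX (fun _ => hπ01 _) (hπcorrect 0)
      (hint 0 0), sub_self]
  have hpost := strong_law_ae_real_comp hindep hident
    (F := fun q => ipwContrast q.2.2.2.2.1
      (q.2.2.2.2.1 * q.2.2.2.1 + (1 - q.2.2.2.2.1) * q.2.2.1) (π q.2.2.2.2.2))
    (by fun_prop) (hint 0 1)
  have hpre := strong_law_ae_real_comp hindep hident
    (F := fun q => ipwContrast q.2.2.2.2.1 q.1 (π q.2.2.2.2.2)) (by fun_prop) (hint 0 0)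
  filter_upwards [hpost, hpre] with ω hpost hpre
  have hlim := hpost.sub hpre
  rw [hpost_mean, hpre_mean, sub_zero] at hlim
  refine hlim.congr fun n => ?_
  simp only [ipwContrast]
  ring

/-- Consistency of the IPW difference-in-difference estimator of the ATE:
with i.i.d. units, a correctly specified propensity score, overlap,
unconfoundedness and pre-intervention mean equality `E[Y₀(1)] = E[Y₀(0)]`,
the estimator `τ̂_IPWDID` converges almost surely to
`τ₀ = E[Y₁(1)] - E[Y₁(0)]`. -/
theorem ipwdid_consistent_ate
    {Ω 𝒳 : Type*} [MeasurableSpace Ω] [StandardBorelSpace Ω] [MeasurableSpace 𝒳]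
    (μ : Measure Ω) [IsProbabilityMeasure μ]
    -- potential outcomes (pre and post period, control and treated versions),
    -- treatment and covariate, for each unit i
    (Pre0 Pre1 Post0 Post1 : ℕ → Ω → ℝ) (D : ℕ → Ω → ℝ) (X : ℕ → Ω → 𝒳)
    (hPre0 : ∀ i, Measurable (Pre0 i)) (hPre1 : ∀ i, Measurable (Pre1 i))
    (hPost0 : ∀ i, Measurable (Post0 i)) (hPost1 : ∀ i, Measurable (Post1 i))
    (hD : ∀ i, Measurable (D i)) (hX : ∀ i, Measurable (X i))
    (hDbin : ∀ i ω, D i ω = 0 ∨ D i ω = 1)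
    -- observed outcomes: no treatment at time 0, consistency at time 1
    (Ypre Ypost : ℕ → Ω → ℝ)
    (hYpre : ∀ i ω, Ypre i ω = Pre0 i ω)
    (hYpost : ∀ i ω, Ypost i ω = D i ω * Post1 i ω + (1 - D i ω) * Post0 i ω)
    -- known (correct) propensity score with overlap
    (π : 𝒳 → ℝ) (hπm : Measurable π) (hπ01 : ∀ x, 0 < π x ∧ π x < 1)
    (hπcorrect : ∀ i, (fun ω => π (X i ω))
      =ᵐ[μ] μ[D i | MeasurableSpace.comap (X i) inferInstance])
    -- unconfoundedness for each unit
    (hunconf : ∀ i, CondIndepFun (MeasurableSpace.comap (X i) inferInstance)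
      (hX i).comap_le
      (fun ω => (Pre0 i ω, Pre1 i ω, Post0 i ω, Post1 i ω)) (D i) μ)
    -- i.i.d. units
    (hindep : iIndepFun
      (fun i ω => (Pre0 i ω, Pre1 i ω, Post0 i ω, Post1 i ω, D i ω, X i ω)) μ)
    (hident : ∀ i, IdentDistrib
      (fun ω => (Pre0 i ω, Pre1 i ω, Post0 i ω, Post1 i ω, D i ω, X i ω))
      (fun ω => (Pre0 0 ω, Pre1 0 ω, Post0 0 ω, Post1 0 ω, D 0 ω, X 0 ω)) μ μ)
    -- integrability of the weighted terms
    (hint : ∀ i t, Integrable (fun ω =>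
      D i ω * (if t = 1 then Ypost i ω else Ypre i ω) / π (X i ω)
      - (1 - D i ω) * (if t = 1 then Ypost i ω else Ypre i ω) / (1 - π (X i ω))) μ)
    (hPreint : ∀ i, Integrable (Pre0 i) μ ∧ Integrable (Pre1 i) μ)
    (hPostint : ∀ i, Integrable (Post0 i) μ ∧ Integrable (Post1 i) μ)
    -- pre-intervention mean equality
    (hpre_eq : ∫ ω, Pre1 0 ω ∂μ = ∫ ω, Pre0 0 ω ∂μ) :
    ∀ᵐ ω ∂μ, Tendsto (fun n : ℕ =>
      (1 / (n : ℝ)) * ∑ i ∈ Finset.range n,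
        (D i ω * Ypost i ω / π (X i ω)
          - (1 - D i ω) * Ypost i ω / (1 - π (X i ω)))
      - (1 / (n : ℝ)) * ∑ i ∈ Finset.range n,
        (D i ω * Ypre i ω / π (X i ω)
          - (1 - D i ω) * Ypre i ω / (1 - π (X i ω))))
      atTop (nhds (∫ ω, Post1 0 ω ∂μ - ∫ ω, Post0 0 ω ∂μ)) :=
  ipwdid_consistent_ate_general μ Pre0 Pre1 Post0 Post1 D X hPre0 hPost0 hPost1 hD hX hDbin Ypre
    Ypost hYpre hYpost π hπm hπ01 hπcorrect hunconf hindep hident hint hPreint hPostint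
end

section
/- Under the longitudinal potential-outcome setup with i.i.d. units, known (correct) propensity score, overlap, unconfoundedness, P(D=1)>0, and the pre-intervention parallel condition E[Y_0(1)|D=1] = E[Y_0(0)|D=1], the IPW difference-in-difference ATT estimator κ̂_IPWDID = (Σ_i D_i)^{-1} Σ_i [D_i - (1-D_i)π(X_i)/(1-π(X_i))](Y_{i1} - Y_{i0}) converges in probability to κ_0 = E[Y_1(1)|D=1] - E[Y_1(0)|D=1]. -/
open MeasureTheory ProbabilityTheory Filter Topology ENNReal

lemma condexp_mul_binary
    {Ω : Type*} {m : MeasurableSpace Ω}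
    [mΩ : MeasurableSpace Ω] [StandardBorelSpace Ω] (hm : m ≤ mΩ)
    (μ : Measure Ω) [IsProbabilityMeasure μ]
    {W Dv : Ω → ℝ} (hW : Measurable W) (hDv : Measurable Dv)
    (hbin : ∀ ω, Dv ω = 0 ∨ Dv ω = 1)
    (hWint : Integrable W μ)
    (hci : CondIndepFun m hm W Dv μ) :
    μ[fun ω => W ω * Dv ω|m] =ᵐ[μ] fun ω => (μ[W|m]) ω * (μ[Dv|m]) ω := by
  haveI : SigmaFinite (μ.trim hm) := by infer_instance
  set ν : Measure ℝ := Measure.map W μ with hν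
  have hDv1 : ∀ ω, ‖Dv ω‖ ≤ 1 := by
    intro ω; rcases hbin ω with h | h <;> simp [h]
  have hDvint : Integrable Dv μ :=
    (integrable_const (1:ℝ)).mono' hDv.aestronglyMeasurable
      (Filter.Eventually.of_forall hDv1)
  have hB : MeasurableSet (Dv ⁻¹' ({1} : Set ℝ)) := hDv (measurableSet_singleton 1)
  have hDind : Dv = Set.indicator (Dv ⁻¹' ({1} : Set ℝ)) (fun _ => (1:ℝ)) := by
    funext ω
    rcases hbin ω with h | h <;>
      simp [Set.indicator_apply, Set.mem_preimage, h]
  have hmul_int : ∀ {u : Ω → ℝ}, Integrable u μ →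
      Integrable (fun ω => u ω * Dv ω) μ := by
    intro u hu
    refine hu.norm.mono' (hu.1.mul hDv.aestronglyMeasurable) ?_
    refine Filter.Eventually.of_forall fun ω => ?_
    rw [norm_mul]
    calc ‖u ω‖ * ‖Dv ω‖ ≤ ‖u ω‖ * 1 :=
          mul_le_mul_of_nonneg_left (hDv1 ω) (norm_nonneg _)
      _ = ‖u ω‖ := mul_one _
  have hDnorm : ∀ᵐ ω ∂μ, ‖(μ[Dv|m]) ω‖ ≤ 1 := by
    have h0 : (0 : Ω → ℝ) ≤ᵐ[μ] μ[Dv|m] :=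
      condExp_nonneg (Filter.Eventually.of_forall fun ω => by
        rcases hbin ω with h | h <;> simp [h])
    have h1' : μ[Dv|m] ≤ᵐ[μ] μ[fun _ => (1:ℝ)|m] :=
      condExp_mono hDvint (integrable_const 1)
        (Filter.Eventually.of_forall fun ω => by
          rcases hbin ω with h | h <;> simp [h])
    have hc : μ[fun _ => (1:ℝ)|m] = fun _ => (1:ℝ) := condExp_const hm (1:ℝ)
    rw [hc] at h1'
    filter_upwards [h0, h1'] with ω a b
    simp only [Pi.zero_apply] at a
    rw [Real.norm_eq_abs, abs_le]
    exact ⟨by linarith, b⟩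
  -- the predicate for the induction
  have key : ∀ ⦃f : ℝ → ℝ⦄, Integrable f ν →
      μ[fun ω => f (W ω) * Dv ω|m]
        =ᵐ[μ] fun ω => (μ[fun ω => f (W ω)|m]) ω * (μ[Dv|m]) ω := by
    have hind : ∀ (c : ℝ) ⦃s : Set ℝ⦄, MeasurableSet s → ν s < ⊤ →
        μ[fun ω => (s.indicator fun _ => c) (W ω) * Dv ω|m]
          =ᵐ[μ] fun ω => (μ[fun ω => (s.indicator fun _ => c) (W ω)|m]) ω
            * (μ[Dv|m]) ω := by
      intro c s hs hsν
      have h1 : (fun ω => (s.indicator (fun _ => c)) (W ω) * Dv ω)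
          = fun ω => c • Set.indicator (W ⁻¹' s ∩ Dv ⁻¹' ({1} : Set ℝ))
              (fun _ => (1:ℝ)) ω := by
        funext ω
        rcases hbin ω with h | h <;>
          by_cases hA' : W ω ∈ s <;>
          simp [Set.indicator_apply, Set.mem_preimage, hA', h]
      have h2 : (fun ω => (s.indicator (fun _ => c)) (W ω))
          = fun ω => c • Set.indicator (W ⁻¹' s) (fun _ => (1:ℝ)) ω := by
        funext ω
        by_cases hA' : W ω ∈ s <;> simp [Set.indicator_apply, hA']
      have hprod := (condIndepFun_iff_condExp_inter_preimage_eq_mul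
        (hm' := hm) hW hDv).mp hci s {1} hs (measurableSet_singleton 1)
      have e1 : μ[fun ω => (s.indicator (fun _ => c)) (W ω) * Dv ω|m]
          =ᵐ[μ] c • μ[Set.indicator (W ⁻¹' s ∩ Dv ⁻¹' ({1} : Set ℝ))
              (fun _ => (1:ℝ))|m] := by
        rw [h1]; exact condExp_smul c _ m
      have e2 : μ[fun ω => (s.indicator (fun _ => c)) (W ω)|m]
          =ᵐ[μ] c • μ[Set.indicator (W ⁻¹' s) (fun _ => (1:ℝ))|m] := by
        rw [h2]; exact condExp_smul c _ m
      have e3 : μ[Dv|m] =ᵐ[μ]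
          μ[Set.indicator (Dv ⁻¹' ({1} : Set ℝ)) (fun _ => (1:ℝ))|m] := by
        rw [← hDind]
      filter_upwards [e1, e2, e3, hprod] with ω h1' h2' h3' h4'
      simp only [Pi.smul_apply, smul_eq_mul] at h1' h2' ⊢
      rw [h1', h4', h2', h3']
      ring
    have hadd : ∀ ⦃f g : ℝ → ℝ⦄,
        Disjoint (Function.support f) (Function.support g) →
        Integrable f ν → Integrable g ν →
        (μ[fun ω => f (W ω) * Dv ω|m]
          =ᵐ[μ] fun ω => (μ[fun ω => f (W ω)|m]) ω * (μ[Dv|m]) ω) →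
        (μ[fun ω => g (W ω) * Dv ω|m]
          =ᵐ[μ] fun ω => (μ[fun ω => g (W ω)|m]) ω * (μ[Dv|m]) ω) →
        μ[fun ω => (f + g) (W ω) * Dv ω|m]
          =ᵐ[μ] fun ω => (μ[fun ω => (f + g) (W ω)|m]) ω * (μ[Dv|m]) ω := by
      intro f g hdisj hfint hgint hPf hPg
      have hfW : Integrable (fun ω => f (W ω)) μ :=
        (integrable_map_measure hfint.1 hW.aemeasurable).mp hfint
      have hgW : Integrable (fun ω => g (W ω)) μ :=
        (integrable_map_measure hgint.1 hW.aemeasurable).mp hgint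
      have e0 : (fun ω => (f + g) (W ω) * Dv ω)
          = (fun ω => f (W ω) * Dv ω) + fun ω => g (W ω) * Dv ω := by
        funext ω; simp [add_mul]
      have e1 : μ[fun ω => (f + g) (W ω) * Dv ω|m]
          =ᵐ[μ] μ[fun ω => f (W ω) * Dv ω|m] + μ[fun ω => g (W ω) * Dv ω|m] := by
        rw [e0]; exact condExp_add (hmul_int hfW) (hmul_int hgW) m
      have e2 : μ[fun ω => (f + g) (W ω)|m]
          =ᵐ[μ] μ[fun ω => f (W ω)|m] + μ[fun ω => g (W ω)|m] := by
        have h' : (fun ω => (f + g) (W ω))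
            = (fun ω => f (W ω)) + fun ω => g (W ω) := by
          funext ω; simp
        rw [h']; exact condExp_add hfW hgW m
      filter_upwards [e1, e2, hPf, hPg] with ω h1' h2' h3' h4'
      simp only [Pi.add_apply] at h1' h2' ⊢
      rw [h1', h3', h4', h2']
      ring
    have hclosed : IsClosed {f : ℝ →₁[ν] ℝ |
        μ[fun ω => f (W ω) * Dv ω|m]
          =ᵐ[μ] fun ω => (μ[fun ω => (f : ℝ → ℝ) (W ω)|m]) ω * (μ[Dv|m]) ω} := by
      refine IsSeqClosed.isClosed fun fs f hfs htend => ?_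
      have hδ : Tendsto (fun n => eLpNorm (⇑(fs n) - ⇑f) 1 ν) atTop (𝓝 0) :=
        (Lp.tendsto_Lp_iff_tendsto_eLpNorm' fs f).mp htend
      have hfν : Integrable (⇑f) ν := L1.integrable_coeFn f
      have hfW : Integrable (fun ω => f (W ω)) μ :=
        (integrable_map_measure hfν.1 hW.aemeasurable).mp hfν
      have hfsν : ∀ n, Integrable (⇑(fs n)) ν := fun n => L1.integrable_coeFn (fs n)
      have hfsW : ∀ n, Integrable (fun ω => (fs n) (W ω)) μ := fun n =>
        (integrable_map_measure (hfsν n).1 hW.aemeasurable).mp (hfsν n)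
      set L := μ[fun ω => f (W ω) * Dv ω|m] with hL
      set R := fun ω => (μ[fun ω => (f : ℝ → ℝ) (W ω)|m]) ω * (μ[Dv|m]) ω with hR
      have hLRmeas : AEStronglyMeasurable (fun ω => L ω - R ω) μ := by
        refine AEStronglyMeasurable.sub ?_ ?_
        · exact (stronglyMeasurable_condExp.mono hm).aestronglyMeasurable
        · exact ((stronglyMeasurable_condExp.mono hm).aestronglyMeasurable.mul
            (stronglyMeasurable_condExp.mono hm).aestronglyMeasurable)
      have hbound : ∀ n, eLpNorm (fun ω => L ω - R ω) 1 μ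
          ≤ 2 * eLpNorm (⇑(fs n) - ⇑f) 1 ν := by
        intro n
        set dn : ℝ → ℝ := ⇑(fs n) - ⇑f with hdn
        have hdν : Integrable dn ν := (hfsν n).sub hfν
        have hdW : Integrable (fun ω => dn (W ω)) μ :=
          (integrable_map_measure hdν.1 hW.aemeasurable).mp hdν
        have hmap : eLpNorm (fun ω => dn (W ω)) 1 μ = eLpNorm dn 1 ν := by
          rw [hν, eLpNorm_map_measure hdν.1 hW.aemeasurable]
          rfl
        set An := μ[fun ω => (fs n) (W ω) * Dv ω|m] with hAn
        set Bn := fun ω => (μ[fun ω => ((fs n : ℝ → ℝ)) (W ω)|m]) ω * (μ[Dv|m]) ω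
          with hBn
        have hAB : An =ᵐ[μ] Bn := hfs n
        -- first piece
        have p1 : eLpNorm (fun ω => An ω - L ω) 1 μ ≤ eLpNorm dn 1 ν := by
          have e : μ[fun ω => dn (W ω) * Dv ω|m] =ᵐ[μ] fun ω => An ω - L ω := by
            have h' : (fun ω => dn (W ω) * Dv ω)
                = (fun ω => (fs n) (W ω) * Dv ω) - fun ω => f (W ω) * Dv ω := by
              funext ω; simp [hdn, sub_mul]
            rw [h']
            exact (condExp_sub (hmul_int (hfsW n)) (hmul_int hfW) m).trans
              (Filter.Eventually.of_forall fun ω => rfl)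
          rw [eLpNorm_congr_ae e.symm]
          refine le_trans (eLpNorm_one_condExp_le_eLpNorm _) ?_
          refine le_trans (eLpNorm_mono_ae (Filter.Eventually.of_forall fun ω => ?_)) hmap.le
          rw [norm_mul]
          calc ‖dn (W ω)‖ * ‖Dv ω‖ ≤ ‖dn (W ω)‖ * 1 :=
                mul_le_mul_of_nonneg_left (hDv1 ω) (norm_nonneg _)
            _ = ‖dn (W ω)‖ := mul_one _
        -- second piece
        have p2 : eLpNorm (fun ω => Bn ω - R ω) 1 μ ≤ eLpNorm dn 1 ν := by
          have e : (fun ω => Bn ω - R ω)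
              =ᵐ[μ] fun ω => (μ[fun ω => dn (W ω)|m]) ω * (μ[Dv|m]) ω := by
            have hsub := condExp_sub (m := m) (hfsW n) hfW
            have e' : μ[fun ω => dn (W ω)|m]
                =ᵐ[μ] μ[fun ω => (fs n) (W ω)|m] - μ[fun ω => f (W ω)|m] := by
              refine (condExp_congr_ae ?_).trans hsub
              exact Filter.Eventually.of_forall fun ω => by simp [hdn]
            filter_upwards [e'] with ω h
            simp only [hBn, hR, Pi.sub_apply] at h ⊢
            rw [h]; ring
          rw [eLpNorm_congr_ae e]
          have step1 : eLpNorm (fun ω => (μ[fun ω => dn (W ω)|m]) ω * (μ[Dv|m]) ω) 1 μ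
              ≤ eLpNorm (μ[fun ω => dn (W ω)|m]) 1 μ := by
            refine eLpNorm_mono_ae ?_
            filter_upwards [hDnorm] with ω h
            rw [norm_mul]
            calc ‖(μ[fun ω => dn (W ω)|m]) ω‖ * ‖(μ[Dv|m]) ω‖
                ≤ ‖(μ[fun ω => dn (W ω)|m]) ω‖ * 1 :=
                  mul_le_mul_of_nonneg_left h (norm_nonneg _)
              _ = ‖(μ[fun ω => dn (W ω)|m]) ω‖ := mul_one _
          exact step1.trans ((eLpNorm_one_condExp_le_eLpNorm _).trans hmap.le)
        have hsplit : (fun ω => L ω - R ω)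
            =ᵐ[μ] fun ω => (Bn ω - R ω) - (An ω - L ω) := by
          filter_upwards [hAB] with ω h
          rw [← h]; ring
        rw [eLpNorm_congr_ae hsplit]
        have hmeasBR : AEStronglyMeasurable (fun ω => Bn ω - R ω) μ := by
          refine AEStronglyMeasurable.sub ?_ ?_ <;>
            exact ((stronglyMeasurable_condExp.mono hm).aestronglyMeasurable.mul
              (stronglyMeasurable_condExp.mono hm).aestronglyMeasurable)
        have hmeasAL : AEStronglyMeasurable (fun ω => An ω - L ω) μ :=
          (stronglyMeasurable_condExp.mono hm).aestronglyMeasurable.sub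
            (stronglyMeasurable_condExp.mono hm).aestronglyMeasurable
        calc eLpNorm (fun ω => (Bn ω - R ω) - (An ω - L ω)) 1 μ
            ≤ eLpNorm (fun ω => Bn ω - R ω) 1 μ + eLpNorm (fun ω => An ω - L ω) 1 μ :=
              eLpNorm_sub_le hmeasBR hmeasAL le_rfl
          _ ≤ eLpNorm dn 1 ν + eLpNorm dn 1 ν := add_le_add p2 p1
          _ = 2 * eLpNorm dn 1 ν := (two_mul _).symm
      have htends0 : Tendsto (fun n => 2 * eLpNorm (⇑(fs n) - ⇑f) 1 ν) atTop (𝓝 0) := by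
        have := ENNReal.Tendsto.const_mul (a := (2 : ℝ≥0∞)) hδ
          (Or.inr (by simp))
        simpa using this
      have hzero : eLpNorm (fun ω => L ω - R ω) 1 μ = 0 := by
        have hle : eLpNorm (fun ω => L ω - R ω) 1 μ ≤ 0 :=
          ge_of_tendsto' htends0 fun n => hbound n
        exact le_antisymm hle zero_le
      have := (eLpNorm_eq_zero_iff hLRmeas one_ne_zero).mp hzero
      filter_upwards [this] with ω h
      simp only [Pi.zero_apply] at h
      have h' : L ω - R ω = 0 := h
      show L ω = R ω
      linarith
    have hae : ∀ ⦃f g : ℝ → ℝ⦄, f =ᵐ[ν] g → Integrable f ν →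
        (μ[fun ω => f (W ω) * Dv ω|m]
          =ᵐ[μ] fun ω => (μ[fun ω => f (W ω)|m]) ω * (μ[Dv|m]) ω) →
        μ[fun ω => g (W ω) * Dv ω|m]
          =ᵐ[μ] fun ω => (μ[fun ω => g (W ω)|m]) ω * (μ[Dv|m]) ω := by
      intro f g hfg hfint hPf
      have hfgW : (fun ω => f (W ω)) =ᵐ[μ] fun ω => g (W ω) :=
        ae_of_ae_map hW.aemeasurable hfg
      have e1 : μ[fun ω => f (W ω) * Dv ω|m] =ᵐ[μ] μ[fun ω => g (W ω) * Dv ω|m] :=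
        condExp_congr_ae (by filter_upwards [hfgW] with ω h; rw [h])
      have e2 : μ[fun ω => f (W ω)|m] =ᵐ[μ] μ[fun ω => g (W ω)|m] :=
        condExp_congr_ae hfgW
      filter_upwards [e1, e2, hPf] with ω h1' h2' h3'
      rw [← h1', h3', h2']
    exact fun f hf => Integrable.induction (μ := ν)
      (P := fun f : ℝ → ℝ => μ[fun ω => f (W ω) * Dv ω|m]
        =ᵐ[μ] fun ω => (μ[fun ω => f (W ω)|m]) ω * (μ[Dv|m]) ω)
      hind hadd hclosed hae hf
  have hid : Integrable (fun x : ℝ => x) ν :=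
    (integrable_map_measure aestronglyMeasurable_id hW.aemeasurable).mpr hWint
  exact key hid


/-- Consistency of the IPW difference-in-difference estimator of the ATT:
with i.i.d. units, correct propensity score, overlap, unconfoundedness,
`P(D=1) > 0` and pre-intervention parallel condition
`E[Y₀(1)|D=1] = E[Y₀(0)|D=1]`, the estimator `κ̂_IPWDID` converges in
probability to `κ₀ = E[Y₁(1)|D=1] - E[Y₁(0)|D=1]`. -/
theorem ipwdid_consistent_att
    {Ω 𝒳 : Type*} [MeasurableSpace Ω] [StandardBorelSpace Ω] [MeasurableSpace 𝒳]
    (μ : Measure Ω) [IsProbabilityMeasure μ]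
    (Pre0 Pre1 Post0 Post1 : ℕ → Ω → ℝ) (D : ℕ → Ω → ℝ) (X : ℕ → Ω → 𝒳)
    (hPre0 : ∀ i, Measurable (Pre0 i)) (hPre1 : ∀ i, Measurable (Pre1 i))
    (hPost0 : ∀ i, Measurable (Post0 i)) (hPost1 : ∀ i, Measurable (Post1 i))
    (hD : ∀ i, Measurable (D i)) (hX : ∀ i, Measurable (X i))
    (hDbin : ∀ i ω, D i ω = 0 ∨ D i ω = 1)
    (hDpos : 0 < μ {ω | D 0 ω = 1})
    (Ypre Ypost : ℕ → Ω → ℝ)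
    (hYpre : ∀ i ω, Ypre i ω = Pre0 i ω)
    (hYpost : ∀ i ω, Ypost i ω = D i ω * Post1 i ω + (1 - D i ω) * Post0 i ω)
    (π : 𝒳 → ℝ) (hπm : Measurable π) (hπ01 : ∀ x, 0 < π x ∧ π x < 1)
    (hπcorrect : ∀ i, (fun ω => π (X i ω))
      =ᵐ[μ] μ[D i | MeasurableSpace.comap (X i) inferInstance])
    (hunconf : ∀ i, CondIndepFun (MeasurableSpace.comap (X i) inferInstance)
      (hX i).comap_le
      (fun ω => (Pre0 i ω, Pre1 i ω, Post0 i ω, Post1 i ω)) (D i) μ)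
    (hindep : iIndepFun
      (fun i ω => (Pre0 i ω, Pre1 i ω, Post0 i ω, Post1 i ω, D i ω, X i ω)) μ)
    (hident : ∀ i, IdentDistrib
      (fun ω => (Pre0 i ω, Pre1 i ω, Post0 i ω, Post1 i ω, D i ω, X i ω))
      (fun ω => (Pre0 0 ω, Pre1 0 ω, Post0 0 ω, Post1 0 ω, D 0 ω, X 0 ω)) μ μ)
    (hint : ∀ i, Integrable (fun ω =>
      (D i ω - (1 - D i ω) * π (X i ω) / (1 - π (X i ω)))
        * (Ypost i ω - Ypre i ω)) μ)
    (hPreint : ∀ i, Integrable (Pre0 i) μ ∧ Integrable (Pre1 i) μ)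
    (hPostint : ∀ i, Integrable (Post0 i) μ ∧ Integrable (Post1 i) μ)
    -- pre-intervention parallel condition (conditional on treatment)
    (hpre_eq : ∫ ω, Pre1 0 ω ∂μ[|{ω | D 0 ω = 1}]
      = ∫ ω, Pre0 0 ω ∂μ[|{ω | D 0 ω = 1}]) :
    TendstoInMeasure μ (fun n : ℕ => fun ω =>
        (∑ i ∈ Finset.range n, D i ω)⁻¹
          * ∑ i ∈ Finset.range n,
            (D i ω - (1 - D i ω) * π (X i ω) / (1 - π (X i ω)))
              * (Ypost i ω - Ypre i ω))
      atTop
      (fun _ => ∫ ω, Post1 0 ω ∂μ[|{ω | D 0 ω = 1}]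
        - ∫ ω, Post0 0 ω ∂μ[|{ω | D 0 ω = 1}]) := by
  classical
  -- basic setup
  set S : Set Ω := {ω | D 0 ω = 1} with hS
  have hSmeas : MeasurableSet S := by
    have : S = D 0 ⁻¹' {1} := rfl
    rw [this]; exact hD 0 (measurableSet_singleton 1)
  set p : ℝ := (μ S).toReal with hp_def
  have hp : 0 < p := ENNReal.toReal_pos hDpos.ne' (measure_ne_top μ S)
  have hm : MeasurableSpace.comap (X 0) inferInstance ≤ ‹MeasurableSpace Ω› :=
    (hX 0).comap_le
  -- the summands
  set Wfun : ℕ → Ω → ℝ := fun i ω =>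
    (D i ω - (1 - D i ω) * π (X i ω) / (1 - π (X i ω)))
      * (Ypost i ω - Ypre i ω) with hWfun
  -- measurability of the tuple maps
  set T : ℕ → Ω → ℝ × ℝ × ℝ × ℝ × ℝ × 𝒳 := fun i ω =>
    (Pre0 i ω, Pre1 i ω, Post0 i ω, Post1 i ω, D i ω, X i ω) with hT
  have hTm : ∀ i, Measurable (T i) := fun i =>
    (hPre0 i).prodMk ((hPre1 i).prodMk ((hPost0 i).prodMk
      ((hPost1 i).prodMk ((hD i).prodMk (hX i)))))
  set φ : ℝ × ℝ × ℝ × ℝ × ℝ × 𝒳 → ℝ := fun q =>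
    (q.2.2.2.2.1 - (1 - q.2.2.2.2.1) * π q.2.2.2.2.2 / (1 - π q.2.2.2.2.2))
      * ((q.2.2.2.2.1 * q.2.2.2.1 + (1 - q.2.2.2.2.1) * q.2.2.1) - q.1) with hφdef
  have hφ : Measurable φ := by
    have he : Measurable fun q : ℝ × ℝ × ℝ × ℝ × ℝ × 𝒳 => q.2.2.2.2.1 :=
      measurable_snd.snd.snd.snd.fst
    have hx : Measurable fun q : ℝ × ℝ × ℝ × ℝ × ℝ × 𝒳 => q.2.2.2.2.2 :=
      measurable_snd.snd.snd.snd.snd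
    have ha : Measurable fun q : ℝ × ℝ × ℝ × ℝ × ℝ × 𝒳 => q.1 := measurable_fst
    have hc : Measurable fun q : ℝ × ℝ × ℝ × ℝ × ℝ × 𝒳 => q.2.2.1 :=
      measurable_snd.snd.fst
    have hd' : Measurable fun q : ℝ × ℝ × ℝ × ℝ × ℝ × 𝒳 => q.2.2.2.1 :=
      measurable_snd.snd.snd.fst
    exact ((he.sub (((measurable_const.sub he).mul (hπm.comp hx)).div
      (measurable_const.sub (hπm.comp hx)))).mul
      (((he.mul hd').add ((measurable_const.sub he).mul hc)).sub ha))
  have hWeq : ∀ i, Wfun i = φ ∘ T i := by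
    intro i; funext ω
    simp only [hWfun, hφdef, hT, Function.comp_apply]
    rw [hYpost, hYpre]
  have hWm : ∀ i, Measurable (Wfun i) := fun i => (hWeq i) ▸ (hφ.comp (hTm i))
  -- integrability of D and Wfun
  have hDint : ∀ i, Integrable (D i) μ := by
    intro i
    refine (integrable_const (1:ℝ)).mono' (hD i).aestronglyMeasurable ?_
    exact Filter.Eventually.of_forall fun ω => by
      rcases hDbin i ω with h | h <;> simp [h]
  have hWint : ∀ i, Integrable (Wfun i) μ := fun i => hint i
  -- strong law for D
  have hDid : D 0 = S.indicator fun _ => (1:ℝ) := by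
    funext ω
    rcases hDbin 0 ω with h | h <;>
      simp [Set.indicator_apply, hS, Set.mem_setOf_eq, h]
  have hintD : ∫ ω, D 0 ω ∂μ = p := by
    rw [show (fun ω => D 0 ω) = D 0 from rfl, hDid,
      integral_indicator_const (1:ℝ) hSmeas, smul_eq_mul, mul_one]; rfl
  have hA : ∀ᵐ ω ∂μ, Filter.Tendsto
      (fun n : ℕ => (∑ i ∈ Finset.range n, D i ω) / n) atTop (𝓝 p) := by
    have := strong_law_ae_real D (hDint 0)
      (fun i j hij => by
        have := (hindep.indepFun hij).comp
          (measurable_snd.snd.snd.snd.fst : Measurable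
            fun q : ℝ × ℝ × ℝ × ℝ × ℝ × 𝒳 => q.2.2.2.2.1)
          (measurable_snd.snd.snd.snd.fst : Measurable
            fun q : ℝ × ℝ × ℝ × ℝ × ℝ × 𝒳 => q.2.2.2.2.1)
        exact this)
      (fun i => (hident i).comp
        (measurable_snd.snd.snd.snd.fst : Measurable
          fun q : ℝ × ℝ × ℝ × ℝ × ℝ × 𝒳 => q.2.2.2.2.1))
    rw [hintD] at this
    exact this
  -- strong law for Wfun
  have hB : ∀ᵐ ω ∂μ, Filter.Tendsto
      (fun n : ℕ => (∑ i ∈ Finset.range n, Wfun i ω) / n) atTop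
      (𝓝 (∫ ω, Wfun 0 ω ∂μ)) := by
    refine strong_law_ae_real Wfun (hWint 0) ?_ ?_
    · intro i j hij
      have := (hindep.indepFun hij).comp hφ hφ
      have e : (IndepFun · · μ) (Wfun i) (Wfun j) := by
        rw [hWeq i, hWeq j]; exact this
      exact e
    · intro i
      have := (hident i).comp hφ
      rw [← hWeq i, ← hWeq 0] at this
      exact this
  haveI : SigmaFinite (μ.trim hm) := by infer_instance
  set U : Ω → ℝ := fun ω => Post0 0 ω - Pre0 0 ω with hUdef
  set V1 : Ω → ℝ := fun ω => Post1 0 ω - Pre0 0 ω with hV1def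
  have hUm : Measurable U := (hPost0 0).sub (hPre0 0)
  have hUint : Integrable U μ := ((hPostint 0).1).sub ((hPreint 0).1)
  have hV1int : Integrable V1 μ := ((hPostint 0).2).sub ((hPreint 0).1)
  have hD0bin := hDbin 0
  have hne : ∀ x, (1:ℝ) - π x ≠ 0 := fun x => (sub_pos.mpr (hπ01 x).2).ne'
  -- pointwise decomposition of the summand
  have hdecomp : ∀ ω, Wfun 0 ω
      = D 0 ω * V1 ω - (π (X 0 ω) / (1 - π (X 0 ω))) * ((1 - D 0 ω) * U ω) := by
    intro ω
    simp only [hWfun, hV1def, hUdef]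
    rw [hYpost, hYpre]
    rcases hD0bin ω with h | h
    · rw [h]; ring
    · rw [h]; simp
  -- integrability helpers
  have hbddmul : ∀ {bf : Ω → ℝ}, Measurable bf → (∀ ω, ‖bf ω‖ ≤ 1) →
      ∀ {u : Ω → ℝ}, Integrable u μ → Integrable (fun ω => bf ω * u ω) μ := by
    intro bf hbfm hbf1 u hu
    refine hu.norm.mono' (hbfm.aestronglyMeasurable.mul hu.1) ?_
    refine Filter.Eventually.of_forall fun ω => ?_
    rw [norm_mul]
    calc ‖bf ω‖ * ‖u ω‖ ≤ 1 * ‖u ω‖ :=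
          mul_le_mul_of_nonneg_right (hbf1 ω) (norm_nonneg _)
      _ = ‖u ω‖ := one_mul _
  have hDnorm1 : ∀ ω, ‖D 0 ω‖ ≤ 1 := fun ω => by
    rcases hD0bin ω with h | h <;> simp [h]
  have hD'norm1 : ∀ ω, ‖1 - D 0 ω‖ ≤ 1 := fun ω => by
    rcases hD0bin ω with h | h <;> simp [h]
  have hDV1int : Integrable (fun ω => D 0 ω * V1 ω) μ :=
    hbddmul (hD 0) hDnorm1 hV1int
  have hrUint : Integrable
      (fun ω => (π (X 0 ω) / (1 - π (X 0 ω))) * ((1 - D 0 ω) * U ω)) μ := by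
    have h' : (fun ω => (π (X 0 ω) / (1 - π (X 0 ω))) * ((1 - D 0 ω) * U ω))
        = fun ω => D 0 ω * V1 ω - Wfun 0 ω := by
      funext ω; rw [hdecomp ω]; ring
    rw [h']; exact hDV1int.sub (hWint 0)
  have hsplit : ∫ ω, Wfun 0 ω ∂μ
      = ∫ ω, D 0 ω * V1 ω ∂μ
        - ∫ ω, (π (X 0 ω) / (1 - π (X 0 ω))) * ((1 - D 0 ω) * U ω) ∂μ := by
    rw [← integral_sub hDV1int hrUint]
    exact integral_congr_ae (Filter.Eventually.of_forall fun ω => by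
      rw [hdecomp ω])
  -- indicator integrals
  have hindic : ∀ {u : Ω → ℝ}, Integrable u μ →
      ∫ ω, D 0 ω * u ω ∂μ = ∫ ω in S, u ω ∂μ := by
    intro u hu
    have h' : (fun ω => D 0 ω * u ω) = S.indicator u := by
      funext ω
      rcases hD0bin ω with h | h <;>
        simp [Set.indicator_apply, hS, Set.mem_setOf_eq, h]
    rw [h', integral_indicator hSmeas]
  -- conditional independence machinery
  set G : Ω → ℝ := fun ω => π (X 0 ω) / (1 - π (X 0 ω)) with hGdef
  have hXmX : Measurable[(MeasurableSpace.comap (X 0) inferInstance)] (X 0) := Measurable.of_comap_le le_rfl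
  have hGsm : StronglyMeasurable[(MeasurableSpace.comap (X 0) inferInstance)] G := by
    exact ((hπm.comp hXmX).div
      (measurable_const.sub (hπm.comp hXmX))).stronglyMeasurable
  have hciU1 : CondIndepFun (MeasurableSpace.comap (X 0) inferInstance) hm U (D 0) μ := by
    have := (hunconf 0).comp
      (φ := fun q : ℝ × ℝ × ℝ × ℝ => q.2.2.1 - q.1) (ψ := id)
      (measurable_snd.snd.fst.sub measurable_fst) measurable_id
    exact this
  have hciU2 : CondIndepFun (MeasurableSpace.comap (X 0) inferInstance) hm U (fun ω => 1 - D 0 ω) μ := by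
    have := (hunconf 0).comp
      (φ := fun q : ℝ × ℝ × ℝ × ℝ => q.2.2.1 - q.1) (ψ := fun t : ℝ => 1 - t)
      (measurable_snd.snd.fst.sub measurable_fst) (measurable_const.sub measurable_id)
    exact this
  have hD'bin : ∀ ω, (1 - D 0 ω) = 0 ∨ (1 - D 0 ω) = 1 := fun ω => by
    rcases hD0bin ω with h | h
    · right; rw [h]; ring
    · left; rw [h]; ring
  have hc1 := condexp_mul_binary hm μ hUm (hD 0) hD0bin hUint hciU1
  have hc2 := condexp_mul_binary hm μ (Dv := fun ω => 1 - D 0 ω) hUm (measurable_const.sub (hD 0))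
    hD'bin hUint hciU2
  have hπX : (fun ω => π (X 0 ω)) =ᵐ[μ] μ[D 0|(MeasurableSpace.comap (X 0) inferInstance)] := hπcorrect 0
  have hD'ce : μ[fun ω => 1 - D 0 ω|(MeasurableSpace.comap (X 0) inferInstance)] =ᵐ[μ] fun ω => 1 - π (X 0 ω) := by
    have h1 : (fun ω => 1 - D 0 ω) = (fun _ => (1:ℝ)) - D 0 := rfl
    rw [h1]
    refine (condExp_sub (integrable_const 1) (hDint 0) _).trans ?_
    have hcc : μ[fun _ => (1:ℝ)|(MeasurableSpace.comap (X 0) inferInstance)] = fun _ => (1:ℝ) := condExp_const hm 1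
    filter_upwards [hπX] with ω h
    rw [Pi.sub_apply, hcc, ← h]
  have hUD'int : Integrable (fun ω => U ω * (1 - D 0 ω)) μ := by
    have h' : (fun ω => U ω * (1 - D 0 ω)) = fun ω => (1 - D 0 ω) * U ω := by
      funext ω; ring
    rw [h']; exact hbddmul (measurable_const.sub (hD 0)) hD'norm1 hUint
  have hUDint : Integrable (fun ω => U ω * D 0 ω) μ := by
    have h' : (fun ω => U ω * D 0 ω) = fun ω => D 0 ω * U ω := by
      funext ω; ring
    rw [h']; exact hbddmul (hD 0) hDnorm1 hUint
  have hGfullint : Integrable (G * fun ω => U ω * (1 - D 0 ω)) μ := by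
    have h' : (G * fun ω => U ω * (1 - D 0 ω))
        = fun ω => (π (X 0 ω) / (1 - π (X 0 ω))) * ((1 - D 0 ω) * U ω) := by
      funext ω; simp only [Pi.mul_apply, hGdef]; ring
    rw [h']; exact hrUint
  -- key identification step
  have e1 : ∫ ω, (π (X 0 ω) / (1 - π (X 0 ω))) * ((1 - D 0 ω) * U ω) ∂μ
      = ∫ ω, π (X 0 ω) * (μ[U|(MeasurableSpace.comap (X 0) inferInstance)]) ω ∂μ := by
    have hstep : μ[G * fun ω => U ω * (1 - D 0 ω)|(MeasurableSpace.comap (X 0) inferInstance)]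
        =ᵐ[μ] fun ω => π (X 0 ω) * (μ[U|(MeasurableSpace.comap (X 0) inferInstance)]) ω := by
      refine (condExp_mul_of_stronglyMeasurable_left hGsm hGfullint hUD'int).trans ?_
      filter_upwards [hc2, hD'ce] with ω h2 h3
      rw [Pi.mul_apply, h2, h3]
      calc G ω * ((μ[U|(MeasurableSpace.comap (X 0) inferInstance)]) ω * (1 - π (X 0 ω)))
          = (π (X 0 ω) / (1 - π (X 0 ω)) * (1 - π (X 0 ω))) * (μ[U|(MeasurableSpace.comap (X 0) inferInstance)]) ω := by
            simp only [hGdef]; ring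
        _ = π (X 0 ω) * (μ[U|(MeasurableSpace.comap (X 0) inferInstance)]) ω := by
            rw [div_mul_cancel₀ _ (hne (X 0 ω))]
    have hi0 : ∫ ω, (π (X 0 ω) / (1 - π (X 0 ω))) * ((1 - D 0 ω) * U ω) ∂μ
        = ∫ ω, (G * fun ω => U ω * (1 - D 0 ω)) ω ∂μ := by
      refine integral_congr_ae (Filter.Eventually.of_forall fun ω => ?_)
      simp only [Pi.mul_apply, hGdef]; ring
    rw [hi0, ← integral_condExp (μ := μ) hm (f := G * fun ω => U ω * (1 - D 0 ω))]
    exact integral_congr_ae hstep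
  have e2 : ∫ ω, D 0 ω * U ω ∂μ = ∫ ω, π (X 0 ω) * (μ[U|(MeasurableSpace.comap (X 0) inferInstance)]) ω ∂μ := by
    have hstep : μ[fun ω => U ω * D 0 ω|(MeasurableSpace.comap (X 0) inferInstance)]
        =ᵐ[μ] fun ω => π (X 0 ω) * (μ[U|(MeasurableSpace.comap (X 0) inferInstance)]) ω := by
      refine hc1.trans ?_
      filter_upwards [hπX] with ω h
      rw [← h]; ring
    have hi0 : ∫ ω, D 0 ω * U ω ∂μ = ∫ ω, U ω * D 0 ω ∂μ := by
      refine integral_congr_ae (Filter.Eventually.of_forall fun ω => ?_)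
      ring
    rw [hi0, ← integral_condExp (μ := μ) hm (f := fun ω => U ω * D 0 ω)]
    exact integral_congr_ae hstep
  -- the mean of Wfun 0
  have hW0 : ∫ ω, Wfun 0 ω ∂μ
      = ∫ ω in S, Post1 0 ω ∂μ - ∫ ω in S, Post0 0 ω ∂μ := by
    have hv : ∫ ω in S, V1 ω ∂μ
        = ∫ ω in S, Post1 0 ω ∂μ - ∫ ω in S, Pre0 0 ω ∂μ :=
      integral_sub ((hPostint 0).2.integrableOn) ((hPreint 0).1.integrableOn)
    have hu : ∫ ω in S, U ω ∂μ
        = ∫ ω in S, Post0 0 ω ∂μ - ∫ ω in S, Pre0 0 ω ∂μ :=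
      integral_sub ((hPostint 0).1.integrableOn) ((hPreint 0).1.integrableOn)
    rw [hsplit, e1, ← e2, hindic hV1int, hindic hUint, hv, hu]
    ring
  -- conditional measure integrals
  have hcondint : ∀ u : Ω → ℝ, ∫ ω, u ω ∂μ[|S] = p⁻¹ * ∫ ω in S, u ω ∂μ := by
    intro u
    rw [ProbabilityTheory.cond, integral_smul_measure, ENNReal.toReal_inv,
      smul_eq_mul]
  have hκ : (∫ ω, Post1 0 ω ∂μ[|S]) - (∫ ω, Post0 0 ω ∂μ[|S])
      = p⁻¹ * ∫ ω, Wfun 0 ω ∂μ := by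
    rw [hcondint, hcondint, hW0]; ring
  -- a.e. convergence of the estimator
  have haecv : ∀ᵐ ω ∂μ, Filter.Tendsto (fun n : ℕ =>
      (∑ i ∈ Finset.range n, D i ω)⁻¹ * ∑ i ∈ Finset.range n, Wfun i ω) atTop
      (𝓝 (p⁻¹ * ∫ ω, Wfun 0 ω ∂μ)) := by
    filter_upwards [hA, hB] with ω hAω hBω
    have h1 : Filter.Tendsto (fun n : ℕ =>
        ((∑ i ∈ Finset.range n, D i ω) / n)⁻¹
          * ((∑ i ∈ Finset.range n, Wfun i ω) / n)) atTop
        (𝓝 (p⁻¹ * ∫ ω, Wfun 0 ω ∂μ)) :=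
      (hAω.inv₀ hp.ne').mul hBω
    refine Filter.Tendsto.congr' ?_ h1
    refine Filter.eventually_atTop.mpr ⟨1, fun n hn => ?_⟩
    have hn0 : (n:ℝ) ≠ 0 := Nat.cast_ne_zero.mpr (Nat.one_le_iff_ne_zero.mp hn)
    show ((∑ i ∈ Finset.range n, D i ω) / n)⁻¹ * ((∑ i ∈ Finset.range n, Wfun i ω) / n)
      = (∑ i ∈ Finset.range n, D i ω)⁻¹ * ∑ i ∈ Finset.range n, Wfun i ω
    rw [div_eq_mul_inv, div_eq_mul_inv, mul_inv, inv_inv]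
    calc (∑ i ∈ Finset.range n, D i ω)⁻¹ * (n:ℝ)
          * ((∑ i ∈ Finset.range n, Wfun i ω) * ((n:ℝ))⁻¹)
        = (∑ i ∈ Finset.range n, D i ω)⁻¹ * (∑ i ∈ Finset.range n, Wfun i ω)
            * ((n:ℝ) * ((n:ℝ))⁻¹) := by ring
      _ = (∑ i ∈ Finset.range n, D i ω)⁻¹
            * ∑ i ∈ Finset.range n, Wfun i ω := by
          rw [mul_inv_cancel₀ hn0, mul_one]
  -- conclude
  have hgoal : TendstoInMeasure μ (fun n : ℕ => fun ω =>
      (∑ i ∈ Finset.range n, D i ω)⁻¹ * ∑ i ∈ Finset.range n, Wfun i ω) atTop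
      (fun _ : Ω => p⁻¹ * ∫ ω, Wfun 0 ω ∂μ) := by
    refine tendstoInMeasure_of_tendsto_ae ?_ haecv
    intro n
    refine Measurable.aestronglyMeasurable ?_
    refine Measurable.mul ?_ ?_
    · exact (Finset.measurable_sum (Finset.range n) fun i _ => hD i).inv
    · exact Finset.measurable_sum (Finset.range n) fun i _ => hWm i
  have hconst : (fun _ : Ω => (∫ ω, Post1 0 ω ∂μ[|S]) - ∫ ω, Post0 0 ω ∂μ[|S])
      = fun _ : Ω => p⁻¹ * ∫ ω, Wfun 0 ω ∂μ := funext fun _ => hκ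
  rw [hconst]
  exact hgoal
end

section
/- Rosenbaum–Rubin sufficiency of the propensity score: if (Y(0), Y(1)) ⫫ D | X, then (Y(0), Y(1)) ⫫ D | π(X), where π(X) = P(D=1|X). -/
/-!
Let `m = σ(π(X)) ≤ m' = σ(X)` and `B = {D = 1}`. Since `P(B | m') = π(X)` is already
`m`-measurable, the tower property and pulling out `π(X)` give
`P(A ∩ B | m) = E[P(A | m') π(X) | m] = P(A | m) P(B | m)` for every event `A` of `(Y(0), Y(1))`.
As `D` is binary, `σ(D)` is generated by the single event `B`, and a π-system argument upgrades
this product rule to conditional independence given `m`.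
-/

open MeasureTheory ProbabilityTheory

namespace ProbabilityTheory

variable {Ω : Type*} {m m' mΩ : MeasurableSpace Ω} {μ : Measure Ω}

theorem condExp_ae_eq_condExp_of_le [IsFiniteMeasure μ] {f : Ω → ℝ} (hmm' : m ≤ m')
    (hm' : m' ≤ mΩ) (hf : AEStronglyMeasurable[m] (μ[f | m']) μ) :
    μ[f | m] =ᵐ[μ] μ[f | m'] :=
  (condExp_condExp_of_le hmm' hm').symm.trans
    (condExp_of_aestronglyMeasurable' (hmm'.trans hm') hf integrable_condExp)

theorem ae_abs_condExp_indicator_one_le_one (s : Set Ω) :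
    ∀ᵐ ω ∂μ, |(μ⟦s | m⟧) ω| ≤ 1 :=
  ae_bdd_abs_condExp_of_ae_bdd_abs <| ae_of_all μ fun ω => by
    by_cases h : ω ∈ s <;> simp [h]

theorem condExp_inter_ae_eq_mul_of_le [IsFiniteMeasure μ] (hmm' : m ≤ m') (hm' : m' ≤ mΩ)
    {s t : Set Ω}
    (hst : μ⟦s ∩ t | m'⟧ =ᵐ[μ] μ⟦s | m'⟧ * μ⟦t | m'⟧)
    (ht : AEStronglyMeasurable[m] (μ⟦t | m'⟧) μ) :
    μ⟦s ∩ t | m⟧ =ᵐ[μ] μ⟦s | m⟧ * μ⟦t | m⟧ := by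
  have ht_eq : μ⟦t | m⟧ =ᵐ[μ] μ⟦t | m'⟧ := condExp_ae_eq_condExp_of_le hmm' hm' ht
  calc μ⟦s ∩ t | m⟧
      =ᵐ[μ] μ[μ⟦s ∩ t | m'⟧ | m] := (condExp_condExp_of_le hmm' hm').symm
    _ =ᵐ[μ] μ[μ⟦t | m⟧ * μ⟦s | m'⟧ | m] :=
        condExp_congr_ae <| hst.trans <| by
          filter_upwards [ht_eq] with ω hω
          simp only [Pi.mul_apply, hω, mul_comm]
    _ =ᵐ[μ] μ⟦t | m⟧ * μ[μ⟦s | m'⟧ | m] :=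
        condExp_stronglyMeasurable_mul_of_bound (hmm'.trans hm') stronglyMeasurable_condExp
          integrable_condExp 1 (ae_abs_condExp_indicator_one_le_one t)
    _ =ᵐ[μ] μ⟦s | m⟧ * μ⟦t | m⟧ := by
        filter_upwards [condExp_condExp_of_le (f := s.indicator fun _ => (1 : ℝ)) hmm' hm']
          with ω hω
        simp only [Pi.mul_apply, hω, mul_comm]

theorem indicator_preimage_one_eq_self {β : Type*} [Zero β] [One β] {g : Ω → β}
    (hg : ∀ ω, g ω = 0 ∨ g ω = 1) : (g ⁻¹' {1}).indicator 1 = g := by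
  funext ω
  by_cases h1 : ω ∈ g ⁻¹' {1}
  · rw [Set.indicator_of_mem h1, Pi.one_apply, h1]
  · rw [Set.indicator_of_notMem h1, (hg ω).resolve_right h1]

theorem comap_eq_generateFrom_preimage_one {β : Type*} [Zero β] [One β] [MeasurableSpace β]
    [MeasurableSingletonClass β] {g : Ω → β} (hg : ∀ ω, g ω = 0 ∨ g ω = 1) :
    MeasurableSpace.comap g inferInstance = MeasurableSpace.generateFrom {g ⁻¹' {1}} := by
  refine le_antisymm (Measurable.comap_le ?_) (MeasurableSpace.generateFrom_le ?_)
  · have h : Measurable[MeasurableSpace.generateFrom {g ⁻¹' {1}}]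
        ((g ⁻¹' {1}).indicator (1 : Ω → β)) := measurable_const.indicator
      (MeasurableSpace.measurableSet_generateFrom (Set.mem_singleton (g ⁻¹' {1})))
    rwa [indicator_preimage_one_eq_self hg] at h
  · rintro _ rfl
    exact ⟨{1}, measurableSet_singleton 1, rfl⟩

variable [StandardBorelSpace Ω] [IsFiniteMeasure μ]

theorem CondIndepFun.of_le_of_forall_eq_zero_or_eq_one {β γ : Type*} [MeasurableSpace β]
    [Zero γ] [One γ] [MeasurableSpace γ] [MeasurableSingletonClass γ]
    {f : Ω → β} {g : Ω → γ} (hf : Measurable f) (hg : Measurable g)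
    (hg01 : ∀ ω, g ω = 0 ∨ g ω = 1) (hmm' : m ≤ m') (hm' : m' ≤ mΩ)
    (h : CondIndepFun m' hm' f g μ)
    (hg1 : AEStronglyMeasurable[m] (μ⟦g ⁻¹' {1} | m'⟧) μ) :
    CondIndepFun m (hmm'.trans hm') f g μ := by
  rw [condIndepFun_iff_condIndep]
  refine CondIndepSets.condIndep hf.comap_le hg.comap_le
    (@MeasurableSpace.isPiSystem_measurableSet Ω (.comap f inferInstance)) (IsPiSystem.singleton _)
    (@MeasurableSpace.generateFrom_measurableSet Ω (.comap f inferInstance)).symm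
    (comap_eq_generateFrom_preimage_one hg01) ?_
  have hg1_meas : MeasurableSet (g ⁻¹' {1}) := hg (measurableSet_singleton 1)
  refine (condIndepSets_iff _ _ {s | MeasurableSet[.comap f inferInstance] s} _
    (fun s hs => hf.comap_le s hs) (fun t ht => (Set.mem_singleton_iff.1 ht) ▸ hg1_meas) μ).2 ?_
  rintro s t hs (rfl : t = g ⁻¹' {1})
  refine condExp_inter_ae_eq_mul_of_le hmm' hm' ?_ hg1
  exact (condIndepFun_iff _ _ _ _ hf hg μ).1 h s _ hs ⟨{1}, measurableSet_singleton 1, rfl⟩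

end ProbabilityTheory

/-- Rosenbaum–Rubin sufficiency of the propensity score: if
`(Y(0), Y(1)) ⫫ D | X` then `(Y(0), Y(1)) ⫫ D | π(X)`, where
`π(X)` is a version of `P(D=1|X) = E[D|X]` given by a measurable `π`. -/
theorem propensity_score_sufficiency
    {Ω 𝒳 : Type*} [MeasurableSpace Ω] [StandardBorelSpace Ω] [MeasurableSpace 𝒳]
    (μ : Measure Ω) [IsProbabilityMeasure μ]
    (D : Ω → ℝ) (X : Ω → 𝒳) (Y0 Y1 : Ω → ℝ)
    (hD : Measurable D) (hX : Measurable X)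
    (hY0 : Measurable Y0) (hY1 : Measurable Y1)
    (hDbin : ∀ ω, D ω = 0 ∨ D ω = 1)
    (π : 𝒳 → ℝ) (hπm : Measurable π)
    (hπ : (fun ω => π (X ω)) =ᵐ[μ] μ[D | MeasurableSpace.comap X inferInstance])
    (hunconf : CondIndepFun (MeasurableSpace.comap X inferInstance) hX.comap_le
      (fun ω => (Y0 ω, Y1 ω)) D μ) :
    CondIndepFun (MeasurableSpace.comap (fun ω => π (X ω)) inferInstance)
      ((hπm.comp hX).comap_le) (fun ω => (Y0 ω, Y1 ω)) D μ := by
  have hle : MeasurableSpace.comap (fun ω => π (X ω)) inferInstance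
      ≤ MeasurableSpace.comap X inferInstance :=
    (hπm.comp (comap_measurable X)).comap_le
  refine hunconf.of_le_of_forall_eq_zero_or_eq_one (hY0.prodMk hY1) hD hDbin hle hX.comap_le ?_
  rw [show (D ⁻¹' {1}).indicator (fun _ => (1 : ℝ)) = D from indicator_preimage_one_eq_self hDbin]
  exact (comap_measurable (fun ω => π (X ω))).aestronglyMeasurable.congr hπ
end
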